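/- arXiv:2201.08807 — 5 statements merged into one kernel-verified Lean document; each statement's English description precedes it below -/
import Mathlib

section
/- Fix ε > 0 and C_ε ∈ ℝ. Let F₁, F₂, F₃ : ℝ → ℝ with F₃ twice differentiable at 0, and set λ := F₂(0), σ := F₃(0), σ₁ := F₃''(0)/2. Define F_{1,ε}(v) := ε^{−2/3} F₁(ε^{1/3}v), F_{2,ε}(v) := ε^{−2/3}(F₂(ε^{1/3}v) − F₂(0))·v, and F_{3,ε}(v) := ε^{−4/3}(F₃(ε^{1/3}v) − F₃(0) − (1/2)F₃''(0)ε^{2/3}v²). Let ξ : ℝ × ℝ → ℝ be any function, let h : ℝ × ℝ → ℝ be once differentiable in t and twice differentiable in x, and suppose that for all (t,x): ∂ₜh = ∂ₓ²h + F₁(ε∂ₓh)∂ₓ²h + F₂(ε∂ₓh)(∂ₓh)² − C_ε + F₃(ε∂ₓh)·ξ^h, where ξ^h(t,x) := ξ(t + ε²C_ε t + ε²h(t,x), x). For i ∈ ℕ set h_i := ε^{2i/3}h, ξ_i := ε^{2i/3}ξ, C_i := ε^{2i/3}C_ε, and ξ_i^{h₀}(t,x) := ξ_i(t + ε²C_ε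 t + ε²h₀(t,x), x) (so h₀ = h). Then for i = 0, 1, 2 and all (t,x): ∂ₜh_i = ∂ₓ²h_i + F_{1,ε}(∂ₓh₁)∂ₓ²h_{i+1} + λ·∂ₓh_{⌈i/2⌉}·∂ₓh_{⌊i/2⌋} + F_{2,ε}(∂ₓh₁)∂ₓh_i − C_i + σ·ξ_i^{h₀} + σ₁(∂ₓh₁)²·ξ_{i+1}^{h₀} + F_{3,ε}(∂ₓh₁)·ξ_{i+2}^{h₀}; and moreover ∂ₜh₃ = ∂ₓ²h₃ + ε^{2/3}F_{1,ε}(∂ₓh₁)∂ₓ²h₃ + F₂(ε^{1/3}∂ₓh₁)·∂ₓh₁·∂ₓh₂ − C₃ + F₃(ε^{1/3}∂ₓh₁)·ξ₃^{h₀}. -/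
/-- The algebraic reduction of the single rescaled growth equation to
the locally subcritical system of four coupled equations. -/
theorem stmt_1 (ε C : ℝ) (hε : 0 < ε)
    (F₁ F₂ F₃ : ℝ → ℝ)
    (hF₃d : DifferentiableAt ℝ F₃ 0) (hF₃d' : DifferentiableAt ℝ (deriv F₃) 0)
    (lam sig sig1 : ℝ)
    (hlam : lam = F₂ 0) (hsig : sig = F₃ 0) (hsig1 : sig1 = deriv (deriv F₃) 0 / 2)
    (F1e F2e F3e : ℝ → ℝ)
    (hF1e : ∀ v, F1e v = ε ^ (-(2 : ℝ) / 3) * F₁ (ε ^ ((1 : ℝ) / 3) * v))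
    (hF2e : ∀ v, F2e v = ε ^ (-(2 : ℝ) / 3) * (F₂ (ε ^ ((1 : ℝ) / 3) * v) - F₂ 0) * v)
    (hF3e : ∀ v, F3e v = ε ^ (-(4 : ℝ) / 3) *
      (F₃ (ε ^ ((1 : ℝ) / 3) * v) - F₃ 0
        - 1 / 2 * deriv (deriv F₃) 0 * ε ^ ((2 : ℝ) / 3) * v ^ 2))
    (ξ h : ℝ → ℝ → ℝ)
    (hht : ∀ t x, DifferentiableAt ℝ (fun s => h s x) t)
    (hhx : ∀ t x, DifferentiableAt ℝ (fun y => h t y) x)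
    (hhxx : ∀ t x, DifferentiableAt ℝ (deriv (fun y => h t y)) x)
    (ξh : ℝ → ℝ → ℝ)
    (hξh : ∀ t x, ξh t x = ξ (t + ε ^ 2 * C * t + ε ^ 2 * h t x) x)
    (heq : ∀ t x,
      deriv (fun s => h s x) t =
        deriv (deriv (fun y => h t y)) x
          + F₁ (ε * deriv (fun y => h t y) x) * deriv (deriv (fun y => h t y)) x
          + F₂ (ε * deriv (fun y => h t y) x) * (deriv (fun y => h t y) x) ^ 2
          - C
          + F₃ (ε * deriv (fun y => h t y) x) * ξh t x)
    (hi : ℕ → ℝ → ℝ → ℝ)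
    (hhi : ∀ i t x, hi i t x = ε ^ (2 * (i : ℝ) / 3) * h t x)
    (ξi : ℕ → ℝ → ℝ → ℝ)
    (hξi : ∀ i t x, ξi i t x = ε ^ (2 * (i : ℝ) / 3) * ξ t x)
    (Ci : ℕ → ℝ)
    (hCi : ∀ i, Ci i = ε ^ (2 * (i : ℝ) / 3) * C)
    (ξih : ℕ → ℝ → ℝ → ℝ)
    (hξih : ∀ i t x, ξih i t x = ξi i (t + ε ^ 2 * C * t + ε ^ 2 * hi 0 t x) x) :
    (∀ i : ℕ, i ≤ 2 → ∀ t x,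
      deriv (fun s => hi i s x) t =
        deriv (deriv (fun y => hi i t y)) x
          + F1e (deriv (fun y => hi 1 t y) x) * deriv (deriv (fun y => hi (i + 1) t y)) x
          + lam * deriv (fun y => hi ((i + 1) / 2) t y) x * deriv (fun y => hi (i / 2) t y) x
          + F2e (deriv (fun y => hi 1 t y) x) * deriv (fun y => hi i t y) x
          - Ci i
          + sig * ξih i t x
          + sig1 * (deriv (fun y => hi 1 t y) x) ^ 2 * ξih (i + 1) t x
          + F3e (deriv (fun y => hi 1 t y) x) * ξih (i + 2) t x) ∧
    (∀ t x,
      deriv (fun s => hi 3 s x) t =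
        deriv (deriv (fun y => hi 3 t y)) x
          + ε ^ ((2 : ℝ) / 3) * F1e (deriv (fun y => hi 1 t y) x)
              * deriv (deriv (fun y => hi 3 t y)) x
          + F₂ (ε ^ ((1 : ℝ) / 3) * deriv (fun y => hi 1 t y) x)
              * deriv (fun y => hi 1 t y) x * deriv (fun y => hi 2 t y) x
          - Ci 3
          + F₃ (ε ^ ((1 : ℝ) / 3) * deriv (fun y => hi 1 t y) x) * ξih 3 t x) := by

  -- Set w := ε^(1/3) and collect power facts.
  have key : ∀ k : ℕ, ε ^ ((k : ℝ) / 3) = (ε ^ ((1:ℝ)/3)) ^ k := by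
    intro k
    rw [← Real.rpow_natCast (ε ^ ((1:ℝ)/3)) k, ← Real.rpow_mul hε.le, one_div,
      inv_mul_eq_div]
  set w : ℝ := ε ^ ((1:ℝ)/3) with hwdef
  have hw0 : 0 < w := Real.rpow_pos_of_pos hε _
  have hw2 : ε ^ ((2:ℝ)/3) = w ^ 2 := by
    rw [show ((2:ℝ)/3) = (((2:ℕ):ℝ)/3) by norm_num, key]
  have hw4 : ε ^ ((4:ℝ)/3) = w ^ 4 := by
    rw [show ((4:ℝ)/3) = (((4:ℕ):ℝ)/3) by norm_num, key]
  have hwm2 : ε ^ (-(2:ℝ)/3) = (w ^ 2)⁻¹ := by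
    rw [show (-(2:ℝ)/3) = -((2:ℝ)/3) by ring, Real.rpow_neg hε.le, hw2]
  have hwm4 : ε ^ (-(4:ℝ)/3) = (w ^ 4)⁻¹ := by
    rw [show (-(4:ℝ)/3) = -((4:ℝ)/3) by ring, Real.rpow_neg hε.le, hw4]
  have hw3 : ε = w ^ 3 := by
    have h3 := key 3
    rwa [show (((3:ℕ):ℝ)/3) = (1:ℝ) by norm_num, Real.rpow_one] at h3
  have hwi : ∀ i : ℕ, ε ^ (2 * (i : ℝ) / 3) = w ^ (2 * i) := by
    intro i
    rw [show (2 * (i : ℝ) / 3) = (((2 * i : ℕ) : ℝ) / 3) by push_cast; ring, key]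
  -- hi 0 = h
  have hi0 : ∀ t x, hi 0 t x = h t x := by
    intro t x
    rw [hhi]
    norm_num
  -- scaling of derivatives
  have hdt : ∀ i t x, deriv (fun s => hi i s x) t = w ^ (2 * i) * deriv (fun s => h s x) t := by
    intro i t x
    have hfe : (fun s => hi i s x) = fun s => ε ^ (2 * (i : ℝ) / 3) * h s x :=
      funext fun s => hhi i s x
    rw [hfe, deriv_const_mul _ (hht t x), hwi]
  have hdx : ∀ i t x, deriv (fun y => hi i t y) x = w ^ (2 * i) * deriv (fun y => h t y) x := by
    intro i t x
    have hfe : (fun y => hi i t y) = fun y => ε ^ (2 * (i : ℝ) / 3) * h t y :=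
      funext fun y => hhi i t y
    rw [hfe, deriv_const_mul _ (hhx t x), hwi]
  have hdxx : ∀ i t x, deriv (deriv (fun y => hi i t y)) x
      = w ^ (2 * i) * deriv (deriv (fun y => h t y)) x := by
    intro i t x
    have hfe : deriv (fun y => hi i t y) = fun z => ε ^ (2 * (i : ℝ) / 3) * deriv (fun y => h t y) z := by
      funext z
      have hfe2 : (fun y => hi i t y) = fun y => ε ^ (2 * (i : ℝ) / 3) * h t y :=
        funext fun y => hhi i t y
      rw [hfe2, deriv_const_mul _ (hhx t z)]
    rw [hfe, deriv_const_mul _ (hhxx t x), hwi]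
  -- scaling of the noise
  have hxiw : ∀ i t x, ξih i t x = w ^ (2 * i) * ξh t x := by
    intro i t x
    rw [hξih, hξi, hξh, hi0, hwi]
  constructor
  · intro i hile t x
    interval_cases i <;>
      (simp only [hdt, hdxx, hdx, hxiw, hCi, hwi, heq, hF1e, hF2e, hF3e, ← hwdef, hw2,
        hwm2, hwm4, hlam, hsig, hsig1]
       rw [hw3]
       ring_nf
       field_simp
       ring)
  · intro t x
    simp only [hdt, hdxx, hdx, hxiw, hCi, hwi, heq, hF1e, hF2e, hF3e, ← hwdef, hw2,
      hwm2, hwm4]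
    rw [hw3]
    ring_nf
    field_simp
    ring
end

section
/- Let ρ : ℝ² → ℝ be smooth and compactly supported and let K ⊂ ℝ² be compact. There exists a constant C > 0 (depending only on ρ and K) such that for all z = (t,x) ∈ K, all λ, ε ∈ (0,1], all c ∈ [−1/2, 1/2], and all measurable φ : ℝ² → ℝ with |φ| ≤ 1 everywhere and support contained in {w : ‖w‖_𝔰 ≤ 1}, one has ∫_{ℝ²} ( ∫_{ℝ²} φ_z^λ(z₁) ρ_ε(z₁^c − z₂) dz₁ )² dz₂ ≤ C (λ+ε)^{−3}, where for z₁ = (t₁,x₁) we write z₁^c := ((1+c)t₁, x₁). -/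
open MeasureTheory
open scoped ENNReal NNReal

set_option maxHeartbeats 2000000

lemma lint_affine (g : ℝ → ℝ≥0∞) (hg : Measurable g) {a : ℝ} (ha : a ≠ 0) (b : ℝ) :
    ∫⁻ t : ℝ, g (a * t + b) = ENNReal.ofReal |a⁻¹| * ∫⁻ t : ℝ, g t := by
  have h1 : MeasurePreserving (fun u : ℝ => u + b) volume volume :=
    measurePreserving_add_right volume b
  calc ∫⁻ t : ℝ, g (a * t + b)
      = ∫⁻ u, g (u + b) ∂(Measure.map (a * ·) volume) :=
        (lintegral_map (hg.comp (measurable_add_const b)) (measurable_const_mul a)).symm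
    _ = ENNReal.ofReal |a⁻¹| * ∫⁻ u : ℝ, g (u + b) := by
        rw [Real.map_volume_mul_left ha, lintegral_smul_measure, smul_eq_mul]
    _ = ENNReal.ofReal |a⁻¹| * ∫⁻ t : ℝ, g t := by rw [h1.lintegral_comp hg]

lemma lint_affine2 (G : ℝ × ℝ → ℝ≥0∞) (hG : Measurable G) {a b : ℝ} (ha : a ≠ 0)
    (hb : b ≠ 0) (s y : ℝ) :
    ∫⁻ p : ℝ × ℝ, G (a * p.1 + s, b * p.2 + y)
      = ENNReal.ofReal |a⁻¹| * (ENNReal.ofReal |b⁻¹| * ∫⁻ p, G p) := by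
  have hmap : Measurable fun p : ℝ × ℝ => G (a * p.1 + s, b * p.2 + y) :=
    hG.comp (((measurable_fst.const_mul a).add_const s).prodMk
      ((measurable_snd.const_mul b).add_const y))
  rw [Measure.volume_eq_prod, lintegral_prod _ hmap.aemeasurable]
  have hinner : ∀ t : ℝ, ∫⁻ x : ℝ, G (a * t + s, b * x + y)
      = ENNReal.ofReal |b⁻¹| * ∫⁻ x : ℝ, G (a * t + s, x) := fun t =>
    lint_affine (fun u => G (a * t + s, u)) (hG.comp measurable_prodMk_left) hb y
  simp only [hinner]
  rw [lintegral_const_mul' _ _ ENNReal.ofReal_ne_top]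
  have houter : ∫⁻ t : ℝ, (fun u : ℝ => ∫⁻ x : ℝ, G (u, x)) (a * t + s)
      = ENNReal.ofReal |a⁻¹| * ∫⁻ u : ℝ, ∫⁻ x : ℝ, G (u, x) :=
    lint_affine _ (hG.lintegral_prod_right') ha s
  rw [show (∫⁻ t : ℝ, ∫⁻ x : ℝ, G (a * t + s, x))
      = ∫⁻ t : ℝ, (fun u : ℝ => ∫⁻ x : ℝ, G (u, x)) (a * t + s) from rfl, houter,
    ← lintegral_prod _ hG.aemeasurable]
  ring

lemma ofReal_mul3_lint {a b c : ℝ} (ha : 0 ≤ a) (hb : 0 ≤ b) (hc : 0 ≤ c) (X : ℝ≥0∞) :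
    ENNReal.ofReal a * (ENNReal.ofReal b * (ENNReal.ofReal c * X))
      = ENNReal.ofReal (a * b * c) * X := by
  rw [ENNReal.ofReal_mul (mul_nonneg ha hb), ENNReal.ofReal_mul ha, mul_assoc, mul_assoc]

lemma ofReal_mul4 {a b c d : ℝ} (ha : 0 ≤ a) (hb : 0 ≤ b) (hc : 0 ≤ c) :
    ENNReal.ofReal a * (ENNReal.ofReal b * (ENNReal.ofReal c * ENNReal.ofReal d))
      = ENNReal.ofReal (a * b * c * d) := by
  rw [← ENNReal.ofReal_mul hc, ← ENNReal.ofReal_mul hb, ← ENNReal.ofReal_mul ha]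
  congr 1
  ring

/-- Second-moment bound for the rescaled, time-dilated mollified
space-time white noise tested against a rescaled test function.  Here the parabolic norm
on `ℝ²` is `‖(t,x)‖_𝔰 = max (√|t|) |x|`, `φ_z^λ(s,y) = λ⁻³ φ(λ⁻²(s−t), λ⁻¹(y−x))` and
`ρ_ε(t,x) = ε⁻³ ρ(ε⁻²t, ε⁻¹x)`, and `z₁^c = ((1+c)t₁, x₁)`. -/
theorem stmt_5 (ρ : ℝ × ℝ → ℝ) (hρ : ContDiff ℝ (⊤ : ℕ∞) ρ) (hρc : HasCompactSupport ρ)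
    (K : Set (ℝ × ℝ)) (hK : IsCompact K) :
    ∃ C > (0 : ℝ), ∀ z ∈ K, ∀ lam ε c : ℝ,
      lam ∈ Set.Ioc (0 : ℝ) 1 → ε ∈ Set.Ioc (0 : ℝ) 1 →
      c ∈ Set.Icc (-(1 / 2) : ℝ) (1 / 2) →
      ∀ φ : ℝ × ℝ → ℝ, Measurable φ → (∀ w, |φ w| ≤ 1) →
        (Function.support φ ⊆ {w : ℝ × ℝ | max (Real.sqrt |w.1|) |w.2| ≤ 1}) →
        (∫ z₂ : ℝ × ℝ, (∫ z₁ : ℝ × ℝ,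
            ((lam ^ 3)⁻¹ * φ ((z₁.1 - z.1) / lam ^ 2, (z₁.2 - z.2) / lam))
              * ((ε ^ 3)⁻¹ * ρ (((1 + c) * z₁.1 - z₂.1) / ε ^ 2, (z₁.2 - z₂.2) / ε))) ^ 2)
          ≤ C * ((lam + ε) ^ 3)⁻¹ := by
  have hρm : Measurable ρ := hρ.continuous.measurable
  obtain ⟨M, hM⟩ := hρc.exists_bound_of_continuous hρ.continuous
  set Mr : ℝ := max M 0 with hMrdef
  have hMr0 : 0 ≤ Mr := le_max_right _ _
  have hρb : ∀ w, (‖ρ w‖₊ : ℝ≥0∞) ≤ ENNReal.ofReal Mr := fun w => by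
    rw [← enorm_eq_nnnorm, Real.enorm_eq_ofReal_abs]
    exact ENNReal.ofReal_le_ofReal ((hM w).trans (le_max_left _ _))
  have hρint : Integrable ρ := hρ.continuous.integrable_of_hasCompactSupport hρc
  have hLtop : ∫⁻ w, (‖ρ w‖₊ : ℝ≥0∞) ≠ ⊤ := hρint.2.ne
  set Lr : ℝ := (∫⁻ w, (‖ρ w‖₊ : ℝ≥0∞)).toReal with hLrdef
  have hLr0 : 0 ≤ Lr := ENNReal.toReal_nonneg
  have hLe : ∫⁻ w, (‖ρ w‖₊ : ℝ≥0∞) = ENNReal.ofReal Lr := (ENNReal.ofReal_toReal hLtop).symm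
  have hCpos : (0:ℝ) < 32 * (Lr + 1) * (2 * Lr + 4 * Mr + 1) := by nlinarith
  refine ⟨32 * (Lr + 1) * (2 * Lr + 4 * Mr + 1), hCpos, ?_⟩
  intro z hz lam ε c hlam hε hc φ hφm hφ1 hφs
  obtain ⟨hl0, hl1⟩ := hlam
  obtain ⟨he0, he1⟩ := hε
  have hc0 : (0 : ℝ) < 1 + c := by have := hc.1; linarith
  have hρe : Measurable fun p : ℝ × ℝ => (‖ρ p‖₊ : ℝ≥0∞) := hρm.nnnorm.coe_nnreal_ennreal
  have hφe : Measurable fun p : ℝ × ℝ => (‖φ p‖₊ : ℝ≥0∞) := hφm.nnnorm.coe_nnreal_ennreal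
  -- bound on the plain lintegral of ‖φ‖
  have hφ4 : ∫⁻ p : ℝ × ℝ, (‖φ p‖₊ : ℝ≥0∞) ≤ ENNReal.ofReal 4 := by
    have hsub : ∀ p : ℝ × ℝ, (‖φ p‖₊ : ℝ≥0∞)
        ≤ (Set.Icc (-1:ℝ) 1 ×ˢ Set.Icc (-1:ℝ) 1).indicator (fun _ => (1:ℝ≥0∞)) p := by
      intro p
      by_cases hp : p ∈ Set.Icc (-1:ℝ) 1 ×ˢ Set.Icc (-1:ℝ) 1
      · rw [Set.indicator_of_mem hp, ← enorm_eq_nnnorm, Real.enorm_eq_ofReal_abs]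
        exact (ENNReal.ofReal_le_ofReal (hφ1 p)).trans_eq ENNReal.ofReal_one
      · rw [Set.indicator_of_notMem hp]
        have hz0 : φ p = 0 := by
          by_contra h
          have hmem := hφs (Function.mem_support.2 h)
          simp only [Set.mem_setOf_eq] at hmem
          have h1 : Real.sqrt |p.1| ≤ 1 := le_of_max_le_left hmem
          have h2 : |p.2| ≤ 1 := le_of_max_le_right hmem
          have h1' : |p.1| ≤ 1 := by
            nlinarith [Real.sq_sqrt (abs_nonneg p.1), Real.sqrt_nonneg |p.1|]
          exact hp (Set.mem_prod.2 ⟨Set.mem_Icc.2 (abs_le.1 h1'), Set.mem_Icc.2 (abs_le.1 h2)⟩)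
        simp [hz0]
    calc ∫⁻ p : ℝ × ℝ, (‖φ p‖₊ : ℝ≥0∞)
        ≤ ∫⁻ p, (Set.Icc (-1:ℝ) 1 ×ˢ Set.Icc (-1:ℝ) 1).indicator (fun _ => (1:ℝ≥0∞)) p :=
          lintegral_mono hsub
      _ = volume (Set.Icc (-1:ℝ) 1 ×ˢ Set.Icc (-1:ℝ) 1) :=
          lintegral_indicator_one (measurableSet_Icc.prod measurableSet_Icc)
      _ = ENNReal.ofReal 4 := by
          rw [Measure.volume_eq_prod, Measure.prod_prod, Real.volume_Icc,
            ← ENNReal.ofReal_mul (by norm_num)]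
          norm_num
  -- the rescaled φ integral
  have hΦint : ∫⁻ w : ℝ × ℝ,
      ENNReal.ofReal (lam ^ 3)⁻¹ * (‖φ ((w.1 - z.1) / lam ^ 2, (w.2 - z.2) / lam)‖₊ : ℝ≥0∞)
      ≤ ENNReal.ofReal 4 := by
    rw [lintegral_const_mul' _ _ ENNReal.ofReal_ne_top]
    have e1 : ∀ w : ℝ × ℝ, ((w.1 - z.1) / lam ^ 2, (w.2 - z.2) / lam)
        = ((1 / lam ^ 2) * w.1 + (-z.1 / lam ^ 2), (1 / lam) * w.2 + (-z.2 / lam)) := by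
      intro w
      rw [Prod.mk.injEq]
      constructor <;> · field_simp; ring
    simp only [e1]
    rw [lint_affine2 _ hφe (by positivity) (by positivity)]
    rw [show ((1:ℝ) / lam ^ 2)⁻¹ = lam ^ 2 by field_simp,
      show ((1:ℝ) / lam)⁻¹ = lam by field_simp,
      abs_of_pos (by positivity : (0:ℝ) < lam ^ 2), abs_of_pos hl0]
    calc ENNReal.ofReal (lam ^ 3)⁻¹ * (ENNReal.ofReal (lam ^ 2) *
          (ENNReal.ofReal lam * ∫⁻ p : ℝ × ℝ, (‖φ p‖₊ : ℝ≥0∞)))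
        = ENNReal.ofReal ((lam ^ 3)⁻¹ * lam ^ 2 * lam) * ∫⁻ p : ℝ × ℝ, (‖φ p‖₊ : ℝ≥0∞) :=
          ofReal_mul3_lint (by positivity) (by positivity) (by positivity) _
      _ = ∫⁻ p : ℝ × ℝ, (‖φ p‖₊ : ℝ≥0∞) := by
          rw [show (lam ^ 3)⁻¹ * lam ^ 2 * lam = (lam ^ 3)⁻¹ * lam ^ 3 by ring,
            inv_mul_cancel₀ (by positivity : (lam:ℝ) ^ 3 ≠ 0), ENNReal.ofReal_one, one_mul]
      _ ≤ ENNReal.ofReal 4 := hφ4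
  -- the rescaled ρ integral in z₁
  have hF1 : ∀ z₂ : ℝ × ℝ, ∫⁻ w : ℝ × ℝ, ENNReal.ofReal (ε ^ 3)⁻¹ *
      (‖ρ (((1 + c) * w.1 - z₂.1) / ε ^ 2, (w.2 - z₂.2) / ε)‖₊ : ℝ≥0∞)
      ≤ ENNReal.ofReal (2 * Lr) := by
    intro z₂
    rw [lintegral_const_mul' _ _ ENNReal.ofReal_ne_top]
    have e1 : ∀ w : ℝ × ℝ, (((1 + c) * w.1 - z₂.1) / ε ^ 2, (w.2 - z₂.2) / ε)
        = (((1 + c) / ε ^ 2) * w.1 + (-z₂.1 / ε ^ 2), (1 / ε) * w.2 + (-z₂.2 / ε)) := by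
      intro w
      rw [Prod.mk.injEq]
      constructor <;> · field_simp; ring
    simp only [e1]
    rw [lint_affine2 _ hρe (by positivity) (by positivity), hLe]
    rw [show (((1:ℝ) + c) / ε ^ 2)⁻¹ = ε ^ 2 / (1 + c) by rw [inv_div],
      show ((1:ℝ) / ε)⁻¹ = ε by field_simp,
      abs_of_pos (by positivity : (0:ℝ) < ε ^ 2 / (1 + c)), abs_of_pos he0,
      ofReal_mul4 (by positivity) (by positivity) (by positivity)]
    refine ENNReal.ofReal_le_ofReal ?_
    have hkey : (ε ^ 3)⁻¹ * (ε ^ 2 / (1 + c)) * ε = (1 + c)⁻¹ := by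
      rw [show (ε ^ 3)⁻¹ * (ε ^ 2 / (1 + c)) * ε = (ε ^ 3)⁻¹ * ε ^ 3 / (1 + c) by ring,
        inv_mul_cancel₀ (by positivity : (ε:ℝ) ^ 3 ≠ 0), one_div]
    rw [hkey]
    have hc2 : (1 + c)⁻¹ ≤ 2 := by
      have h2 : (1:ℝ) / (1 + c) ≤ 2 := by
        rw [div_le_iff₀ hc0]; linarith [hc.1]
      simpa [one_div] using h2
    nlinarith [hc2, hLr0]
  -- the rescaled ρ integral in z₂
  have hF2 : ∀ w : ℝ × ℝ, ∫⁻ z₂ : ℝ × ℝ, ENNReal.ofReal (ε ^ 3)⁻¹ *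
      (‖ρ (((1 + c) * w.1 - z₂.1) / ε ^ 2, (w.2 - z₂.2) / ε)‖₊ : ℝ≥0∞)
      = ENNReal.ofReal Lr := by
    intro w
    rw [lintegral_const_mul' _ _ ENNReal.ofReal_ne_top]
    have e1 : ∀ z₂ : ℝ × ℝ, (((1 + c) * w.1 - z₂.1) / ε ^ 2, (w.2 - z₂.2) / ε)
        = ((-(1 / ε ^ 2)) * z₂.1 + ((1 + c) * w.1 / ε ^ 2), (-(1 / ε)) * z₂.2 + (w.2 / ε)) := by
      intro z₂
      rw [Prod.mk.injEq]
      constructor <;> · field_simp; ring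
    simp only [e1]
    rw [lint_affine2 _ hρe (neg_ne_zero.2 (by positivity)) (neg_ne_zero.2 (by positivity)), hLe]
    rw [show (-(1 / ε ^ 2) : ℝ)⁻¹ = -(ε ^ 2) by field_simp,
      show (-(1 / ε) : ℝ)⁻¹ = -ε by field_simp,
      abs_neg, abs_neg, abs_of_pos (by positivity : (0:ℝ) < ε ^ 2), abs_of_pos he0,
      ofReal_mul4 (by positivity) (by positivity) (by positivity)]
    congr 1
    rw [show (ε ^ 3)⁻¹ * ε ^ 2 * ε = (ε ^ 3)⁻¹ * ε ^ 3 by ring,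
      inv_mul_cancel₀ (by positivity : (ε:ℝ) ^ 3 ≠ 0), one_mul]
  -- pointwise bound on the ennnorm of the inner integral
  have hnorm : ∀ z₂ : ℝ × ℝ, (‖∫ z₁ : ℝ × ℝ,
      ((lam ^ 3)⁻¹ * φ ((z₁.1 - z.1) / lam ^ 2, (z₁.2 - z.2) / lam))
        * ((ε ^ 3)⁻¹ * ρ (((1 + c) * z₁.1 - z₂.1) / ε ^ 2, (z₁.2 - z₂.2) / ε))‖₊ : ℝ≥0∞)
      ≤ ∫⁻ w : ℝ × ℝ,
        (ENNReal.ofReal (lam ^ 3)⁻¹ * (‖φ ((w.1 - z.1) / lam ^ 2, (w.2 - z.2) / lam)‖₊ : ℝ≥0∞))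
        * (ENNReal.ofReal (ε ^ 3)⁻¹ *
            (‖ρ (((1 + c) * w.1 - z₂.1) / ε ^ 2, (w.2 - z₂.2) / ε)‖₊ : ℝ≥0∞)) := by
    intro z₂
    refine (enorm_integral_le_lintegral_enorm _).trans
      (le_of_eq (lintegral_congr fun w => ?_))
    rw [enorm_eq_nnnorm, nnnorm_mul, ENNReal.coe_mul, nnnorm_mul, nnnorm_mul, ENNReal.coe_mul, ENNReal.coe_mul,
      ← enorm_eq_nnnorm ((lam ^ 3)⁻¹), Real.enorm_eq_ofReal (by positivity : (0:ℝ) ≤ (lam ^ 3)⁻¹),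
      ← enorm_eq_nnnorm ((ε ^ 3)⁻¹), Real.enorm_eq_ofReal (by positivity : (0:ℝ) ≤ (ε ^ 3)⁻¹)]
  -- first bound on the double kernel integral
  have hI1 : ∀ z₂ : ℝ × ℝ, (∫⁻ w : ℝ × ℝ,
      (ENNReal.ofReal (lam ^ 3)⁻¹ * (‖φ ((w.1 - z.1) / lam ^ 2, (w.2 - z.2) / lam)‖₊ : ℝ≥0∞))
      * (ENNReal.ofReal (ε ^ 3)⁻¹ *
          (‖ρ (((1 + c) * w.1 - z₂.1) / ε ^ 2, (w.2 - z₂.2) / ε)‖₊ : ℝ≥0∞)))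
      ≤ ENNReal.ofReal ((lam ^ 3)⁻¹ * (2 * Lr)) := by
    intro z₂
    have hφle : ∀ w : ℝ × ℝ,
        (ENNReal.ofReal (lam ^ 3)⁻¹ * (‖φ ((w.1 - z.1) / lam ^ 2, (w.2 - z.2) / lam)‖₊ : ℝ≥0∞))
        ≤ ENNReal.ofReal (lam ^ 3)⁻¹ := by
      intro w
      have h1 : (‖φ ((w.1 - z.1) / lam ^ 2, (w.2 - z.2) / lam)‖₊ : ℝ≥0∞) ≤ 1 := by
        rw [← enorm_eq_nnnorm, Real.enorm_eq_ofReal_abs]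
        exact (ENNReal.ofReal_le_ofReal (hφ1 _)).trans_eq ENNReal.ofReal_one
      calc ENNReal.ofReal (lam ^ 3)⁻¹ * _ ≤ ENNReal.ofReal (lam ^ 3)⁻¹ * 1 :=
            mul_le_mul_right h1 _
        _ = ENNReal.ofReal (lam ^ 3)⁻¹ := mul_one _
    calc ∫⁻ w : ℝ × ℝ,
        (ENNReal.ofReal (lam ^ 3)⁻¹ * (‖φ ((w.1 - z.1) / lam ^ 2, (w.2 - z.2) / lam)‖₊ : ℝ≥0∞))
        * (ENNReal.ofReal (ε ^ 3)⁻¹ *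
            (‖ρ (((1 + c) * w.1 - z₂.1) / ε ^ 2, (w.2 - z₂.2) / ε)‖₊ : ℝ≥0∞))
        ≤ ∫⁻ w : ℝ × ℝ, ENNReal.ofReal (lam ^ 3)⁻¹ * (ENNReal.ofReal (ε ^ 3)⁻¹ *
            (‖ρ (((1 + c) * w.1 - z₂.1) / ε ^ 2, (w.2 - z₂.2) / ε)‖₊ : ℝ≥0∞)) :=
          lintegral_mono fun w => mul_le_mul_left (hφle w) _
      _ = ENNReal.ofReal (lam ^ 3)⁻¹ * ∫⁻ w : ℝ × ℝ, ENNReal.ofReal (ε ^ 3)⁻¹ *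
            (‖ρ (((1 + c) * w.1 - z₂.1) / ε ^ 2, (w.2 - z₂.2) / ε)‖₊ : ℝ≥0∞) :=
          lintegral_const_mul' _ _ ENNReal.ofReal_ne_top
      _ ≤ ENNReal.ofReal (lam ^ 3)⁻¹ * ENNReal.ofReal (2 * Lr) := mul_le_mul_right (hF1 z₂) _
      _ = ENNReal.ofReal ((lam ^ 3)⁻¹ * (2 * Lr)) :=
          (ENNReal.ofReal_mul (by positivity)).symm
  -- second bound on the double kernel integral
  have hI2 : ∀ z₂ : ℝ × ℝ, (∫⁻ w : ℝ × ℝ,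
      (ENNReal.ofReal (lam ^ 3)⁻¹ * (‖φ ((w.1 - z.1) / lam ^ 2, (w.2 - z.2) / lam)‖₊ : ℝ≥0∞))
      * (ENNReal.ofReal (ε ^ 3)⁻¹ *
          (‖ρ (((1 + c) * w.1 - z₂.1) / ε ^ 2, (w.2 - z₂.2) / ε)‖₊ : ℝ≥0∞)))
      ≤ ENNReal.ofReal (4 * ((ε ^ 3)⁻¹ * Mr)) := by
    intro z₂
    have hρle : ∀ w : ℝ × ℝ,
        (ENNReal.ofReal (ε ^ 3)⁻¹ *
          (‖ρ (((1 + c) * w.1 - z₂.1) / ε ^ 2, (w.2 - z₂.2) / ε)‖₊ : ℝ≥0∞))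
        ≤ ENNReal.ofReal ((ε ^ 3)⁻¹ * Mr) := fun w =>
      (mul_le_mul_right (hρb _) _).trans_eq (ENNReal.ofReal_mul (by positivity)).symm
    calc ∫⁻ w : ℝ × ℝ,
        (ENNReal.ofReal (lam ^ 3)⁻¹ * (‖φ ((w.1 - z.1) / lam ^ 2, (w.2 - z.2) / lam)‖₊ : ℝ≥0∞))
        * (ENNReal.ofReal (ε ^ 3)⁻¹ *
            (‖ρ (((1 + c) * w.1 - z₂.1) / ε ^ 2, (w.2 - z₂.2) / ε)‖₊ : ℝ≥0∞))
        ≤ ∫⁻ w : ℝ × ℝ,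
          (ENNReal.ofReal (lam ^ 3)⁻¹ * (‖φ ((w.1 - z.1) / lam ^ 2, (w.2 - z.2) / lam)‖₊ : ℝ≥0∞))
          * ENNReal.ofReal ((ε ^ 3)⁻¹ * Mr) :=
          lintegral_mono fun w => mul_le_mul_right (hρle w) _
      _ = (∫⁻ w : ℝ × ℝ, ENNReal.ofReal (lam ^ 3)⁻¹ *
            (‖φ ((w.1 - z.1) / lam ^ 2, (w.2 - z.2) / lam)‖₊ : ℝ≥0∞))
          * ENNReal.ofReal ((ε ^ 3)⁻¹ * Mr) :=
          lintegral_mul_const' _ _ ENNReal.ofReal_ne_top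
      _ ≤ ENNReal.ofReal 4 * ENNReal.ofReal ((ε ^ 3)⁻¹ * Mr) := mul_le_mul_left hΦint _
      _ = ENNReal.ofReal (4 * ((ε ^ 3)⁻¹ * Mr)) :=
          (ENNReal.ofReal_mul (by norm_num)).symm
  -- measurability of the double kernel
  have hmeasF : Measurable (fun q : (ℝ × ℝ) × (ℝ × ℝ) =>
      (ENNReal.ofReal (lam ^ 3)⁻¹ * (‖φ ((q.2.1 - z.1) / lam ^ 2, (q.2.2 - z.2) / lam)‖₊ : ℝ≥0∞))
      * (ENNReal.ofReal (ε ^ 3)⁻¹ *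
          (‖ρ (((1 + c) * q.2.1 - q.1.1) / ε ^ 2, (q.2.2 - q.1.2) / ε)‖₊ : ℝ≥0∞))) := by
    apply Measurable.fun_mul
    · exact measurable_const.mul ((hφm.comp (by fun_prop)).nnnorm.coe_nnreal_ennreal)
    · exact measurable_const.mul ((hρm.comp (by fun_prop)).nnnorm.coe_nnreal_ennreal)
  -- total integral of the double kernel
  have hIT : ∫⁻ z₂ : ℝ × ℝ, ∫⁻ w : ℝ × ℝ,
      (ENNReal.ofReal (lam ^ 3)⁻¹ * (‖φ ((w.1 - z.1) / lam ^ 2, (w.2 - z.2) / lam)‖₊ : ℝ≥0∞))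
      * (ENNReal.ofReal (ε ^ 3)⁻¹ *
          (‖ρ (((1 + c) * w.1 - z₂.1) / ε ^ 2, (w.2 - z₂.2) / ε)‖₊ : ℝ≥0∞))
      ≤ ENNReal.ofReal (4 * Lr) := by
    rw [lintegral_lintegral_swap hmeasF.aemeasurable]
    have hptw : ∀ w : ℝ × ℝ, (∫⁻ z₂ : ℝ × ℝ,
        (ENNReal.ofReal (lam ^ 3)⁻¹ * (‖φ ((w.1 - z.1) / lam ^ 2, (w.2 - z.2) / lam)‖₊ : ℝ≥0∞))
        * (ENNReal.ofReal (ε ^ 3)⁻¹ *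
            (‖ρ (((1 + c) * w.1 - z₂.1) / ε ^ 2, (w.2 - z₂.2) / ε)‖₊ : ℝ≥0∞)))
        = (ENNReal.ofReal (lam ^ 3)⁻¹ *
            (‖φ ((w.1 - z.1) / lam ^ 2, (w.2 - z.2) / lam)‖₊ : ℝ≥0∞)) * ENNReal.ofReal Lr := by
      intro w
      rw [lintegral_const_mul' _ _
        (ENNReal.mul_ne_top ENNReal.ofReal_ne_top ENNReal.coe_ne_top), hF2 w]
    calc ∫⁻ w : ℝ × ℝ, ∫⁻ z₂ : ℝ × ℝ,
        (ENNReal.ofReal (lam ^ 3)⁻¹ * (‖φ ((w.1 - z.1) / lam ^ 2, (w.2 - z.2) / lam)‖₊ : ℝ≥0∞))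
        * (ENNReal.ofReal (ε ^ 3)⁻¹ *
            (‖ρ (((1 + c) * w.1 - z₂.1) / ε ^ 2, (w.2 - z₂.2) / ε)‖₊ : ℝ≥0∞))
        = ∫⁻ w : ℝ × ℝ, (ENNReal.ofReal (lam ^ 3)⁻¹ *
            (‖φ ((w.1 - z.1) / lam ^ 2, (w.2 - z.2) / lam)‖₊ : ℝ≥0∞)) * ENNReal.ofReal Lr :=
          lintegral_congr hptw
      _ = (∫⁻ w : ℝ × ℝ, ENNReal.ofReal (lam ^ 3)⁻¹ *
            (‖φ ((w.1 - z.1) / lam ^ 2, (w.2 - z.2) / lam)‖₊ : ℝ≥0∞)) * ENNReal.ofReal Lr :=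
          lintegral_mul_const' _ _ ENNReal.ofReal_ne_top
      _ ≤ ENNReal.ofReal 4 * ENNReal.ofReal Lr := mul_le_mul_left hΦint _
      _ = ENNReal.ofReal (4 * Lr) := (ENNReal.ofReal_mul (by norm_num)).symm
  -- measurability of the squared inner integral
  have hfm : AEStronglyMeasurable (fun z₂ : ℝ × ℝ => (∫ z₁ : ℝ × ℝ,
      ((lam ^ 3)⁻¹ * φ ((z₁.1 - z.1) / lam ^ 2, (z₁.2 - z.2) / lam))
        * ((ε ^ 3)⁻¹ * ρ (((1 + c) * z₁.1 - z₂.1) / ε ^ 2, (z₁.2 - z₂.2) / ε))) ^ 2)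
      (volume : Measure (ℝ × ℝ)) := by
    have hsm : StronglyMeasurable fun q : (ℝ × ℝ) × (ℝ × ℝ) =>
        ((lam ^ 3)⁻¹ * φ ((q.2.1 - z.1) / lam ^ 2, (q.2.2 - z.2) / lam))
          * ((ε ^ 3)⁻¹ * ρ (((1 + c) * q.2.1 - q.1.1) / ε ^ 2, (q.2.2 - q.1.2) / ε)) := by
      apply Measurable.stronglyMeasurable
      exact (measurable_const.mul (hφm.comp (by fun_prop))).mul
        (measurable_const.mul (hρm.comp (by fun_prop)))
    exact ((hsm.integral_prod_right'.measurable).pow_const 2).aestronglyMeasurable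
  -- key bound in ℝ≥0∞
  have key : ∫⁻ z₂ : ℝ × ℝ, ENNReal.ofReal ((∫ z₁ : ℝ × ℝ,
      ((lam ^ 3)⁻¹ * φ ((z₁.1 - z.1) / lam ^ 2, (z₁.2 - z.2) / lam))
        * ((ε ^ 3)⁻¹ * ρ (((1 + c) * z₁.1 - z₂.1) / ε ^ 2, (z₁.2 - z₂.2) / ε))) ^ 2)
      ≤ ENNReal.ofReal (32 * (Lr + 1) * (2 * Lr + 4 * Mr + 1) * ((lam + ε) ^ 3)⁻¹) := by
    have hsq : ∀ x : ℝ, ENNReal.ofReal (x ^ 2) = (‖x‖₊ : ℝ≥0∞) * (‖x‖₊ : ℝ≥0∞) := by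
      intro x
      rw [sq, ← abs_mul_abs_self, ENNReal.ofReal_mul (abs_nonneg _),
        ← Real.enorm_eq_ofReal_abs, enorm_eq_nnnorm]
    rcases le_total ε lam with hle | hle
    · -- ε ≤ lam : use the λ-bound
      have hreal : (lam ^ 3)⁻¹ * (2 * Lr) * (4 * Lr)
          ≤ 32 * (Lr + 1) * (2 * Lr + 4 * Mr + 1) * ((lam + ε) ^ 3)⁻¹ := by
        have hpos1 : (0:ℝ) < lam ^ 3 := by positivity
        have hpos2 : (0:ℝ) < (lam + ε) ^ 3 := by positivity
        rw [show (lam ^ 3)⁻¹ * (2 * Lr) * (4 * Lr) = (8 * Lr * Lr) / lam ^ 3 by ring,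
          show 32 * (Lr + 1) * (2 * Lr + 4 * Mr + 1) * ((lam + ε) ^ 3)⁻¹
            = (32 * (Lr + 1) * (2 * Lr + 4 * Mr + 1)) / (lam + ε) ^ 3 by ring,
          div_le_div_iff₀ hpos1 hpos2]
        have h8 : (lam + ε) ^ 3 ≤ 8 * lam ^ 3 := by
          have h := pow_le_pow_left₀ (by positivity : (0:ℝ) ≤ lam + ε)
            (by linarith : lam + ε ≤ 2 * lam) 3
          calc (lam + ε) ^ 3 ≤ (2 * lam) ^ 3 := h
            _ = 8 * lam ^ 3 := by ring
        nlinarith [mul_le_mul_of_nonneg_left h8 (show (0:ℝ) ≤ 8 * Lr * Lr by positivity),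
          mul_le_mul_of_nonneg_right
            (show 64 * Lr * Lr ≤ 32 * (Lr + 1) * (2 * Lr + 4 * Mr + 1) by nlinarith)
            hpos1.le]
      calc ∫⁻ z₂ : ℝ × ℝ, ENNReal.ofReal ((∫ z₁ : ℝ × ℝ,
            ((lam ^ 3)⁻¹ * φ ((z₁.1 - z.1) / lam ^ 2, (z₁.2 - z.2) / lam))
              * ((ε ^ 3)⁻¹ * ρ (((1 + c) * z₁.1 - z₂.1) / ε ^ 2, (z₁.2 - z₂.2) / ε))) ^ 2)
          ≤ ∫⁻ z₂ : ℝ × ℝ, ENNReal.ofReal ((lam ^ 3)⁻¹ * (2 * Lr)) * ∫⁻ w : ℝ × ℝ,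
            (ENNReal.ofReal (lam ^ 3)⁻¹ *
              (‖φ ((w.1 - z.1) / lam ^ 2, (w.2 - z.2) / lam)‖₊ : ℝ≥0∞))
            * (ENNReal.ofReal (ε ^ 3)⁻¹ *
                (‖ρ (((1 + c) * w.1 - z₂.1) / ε ^ 2, (w.2 - z₂.2) / ε)‖₊ : ℝ≥0∞)) := by
            refine lintegral_mono fun z₂ => ?_
            rw [hsq]
            exact mul_le_mul' ((hnorm z₂).trans (hI1 z₂)) (hnorm z₂)
        _ = ENNReal.ofReal ((lam ^ 3)⁻¹ * (2 * Lr)) * ∫⁻ z₂ : ℝ × ℝ, ∫⁻ w : ℝ × ℝ,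
            (ENNReal.ofReal (lam ^ 3)⁻¹ *
              (‖φ ((w.1 - z.1) / lam ^ 2, (w.2 - z.2) / lam)‖₊ : ℝ≥0∞))
            * (ENNReal.ofReal (ε ^ 3)⁻¹ *
                (‖ρ (((1 + c) * w.1 - z₂.1) / ε ^ 2, (w.2 - z₂.2) / ε)‖₊ : ℝ≥0∞)) :=
            lintegral_const_mul' _ _ ENNReal.ofReal_ne_top
        _ ≤ ENNReal.ofReal ((lam ^ 3)⁻¹ * (2 * Lr)) * ENNReal.ofReal (4 * Lr) :=
            mul_le_mul_right hIT _
        _ = ENNReal.ofReal ((lam ^ 3)⁻¹ * (2 * Lr) * (4 * Lr)) :=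
            (ENNReal.ofReal_mul (by positivity)).symm
        _ ≤ ENNReal.ofReal (32 * (Lr + 1) * (2 * Lr + 4 * Mr + 1) * ((lam + ε) ^ 3)⁻¹) :=
            ENNReal.ofReal_le_ofReal hreal
    · -- lam ≤ ε : use the ε-bound
      have hreal : 4 * ((ε ^ 3)⁻¹ * Mr) * (4 * Lr)
          ≤ 32 * (Lr + 1) * (2 * Lr + 4 * Mr + 1) * ((lam + ε) ^ 3)⁻¹ := by
        have hpos1 : (0:ℝ) < ε ^ 3 := by positivity
        have hpos2 : (0:ℝ) < (lam + ε) ^ 3 := by positivity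
        rw [show 4 * ((ε ^ 3)⁻¹ * Mr) * (4 * Lr) = (16 * Mr * Lr) / ε ^ 3 by ring,
          show 32 * (Lr + 1) * (2 * Lr + 4 * Mr + 1) * ((lam + ε) ^ 3)⁻¹
            = (32 * (Lr + 1) * (2 * Lr + 4 * Mr + 1)) / (lam + ε) ^ 3 by ring,
          div_le_div_iff₀ hpos1 hpos2]
        have h8 : (lam + ε) ^ 3 ≤ 8 * ε ^ 3 := by
          have h := pow_le_pow_left₀ (by positivity : (0:ℝ) ≤ lam + ε)
            (by linarith : lam + ε ≤ 2 * ε) 3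
          calc (lam + ε) ^ 3 ≤ (2 * ε) ^ 3 := h
            _ = 8 * ε ^ 3 := by ring
        nlinarith [mul_le_mul_of_nonneg_left h8 (show (0:ℝ) ≤ 16 * Mr * Lr by positivity),
          mul_le_mul_of_nonneg_right
            (show 128 * Mr * Lr ≤ 32 * (Lr + 1) * (2 * Lr + 4 * Mr + 1) by nlinarith)
            hpos1.le]
      calc ∫⁻ z₂ : ℝ × ℝ, ENNReal.ofReal ((∫ z₁ : ℝ × ℝ,
            ((lam ^ 3)⁻¹ * φ ((z₁.1 - z.1) / lam ^ 2, (z₁.2 - z.2) / lam))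
              * ((ε ^ 3)⁻¹ * ρ (((1 + c) * z₁.1 - z₂.1) / ε ^ 2, (z₁.2 - z₂.2) / ε))) ^ 2)
          ≤ ∫⁻ z₂ : ℝ × ℝ, ENNReal.ofReal (4 * ((ε ^ 3)⁻¹ * Mr)) * ∫⁻ w : ℝ × ℝ,
            (ENNReal.ofReal (lam ^ 3)⁻¹ *
              (‖φ ((w.1 - z.1) / lam ^ 2, (w.2 - z.2) / lam)‖₊ : ℝ≥0∞))
            * (ENNReal.ofReal (ε ^ 3)⁻¹ *
                (‖ρ (((1 + c) * w.1 - z₂.1) / ε ^ 2, (w.2 - z₂.2) / ε)‖₊ : ℝ≥0∞)) := by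
            refine lintegral_mono fun z₂ => ?_
            rw [hsq]
            exact mul_le_mul' ((hnorm z₂).trans (hI2 z₂)) (hnorm z₂)
        _ = ENNReal.ofReal (4 * ((ε ^ 3)⁻¹ * Mr)) * ∫⁻ z₂ : ℝ × ℝ, ∫⁻ w : ℝ × ℝ,
            (ENNReal.ofReal (lam ^ 3)⁻¹ *
              (‖φ ((w.1 - z.1) / lam ^ 2, (w.2 - z.2) / lam)‖₊ : ℝ≥0∞))
            * (ENNReal.ofReal (ε ^ 3)⁻¹ *
                (‖ρ (((1 + c) * w.1 - z₂.1) / ε ^ 2, (w.2 - z₂.2) / ε)‖₊ : ℝ≥0∞)) :=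
            lintegral_const_mul' _ _ ENNReal.ofReal_ne_top
        _ ≤ ENNReal.ofReal (4 * ((ε ^ 3)⁻¹ * Mr)) * ENNReal.ofReal (4 * Lr) :=
            mul_le_mul_right hIT _
        _ = ENNReal.ofReal (4 * ((ε ^ 3)⁻¹ * Mr) * (4 * Lr)) :=
            (ENNReal.ofReal_mul (by positivity)).symm
        _ ≤ ENNReal.ofReal (32 * (Lr + 1) * (2 * Lr + 4 * Mr + 1) * ((lam + ε) ^ 3)⁻¹) :=
            ENNReal.ofReal_le_ofReal hreal
  -- conclude
  rw [integral_eq_lintegral_of_nonneg_ae (ae_of_all _ fun z₂ => sq_nonneg _) hfm]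
  exact ENNReal.toReal_le_of_le_ofReal
    (mul_nonneg hCpos.le (by positivity)) key
end

section
/- Let ρ : ℝ² → ℝ be smooth and compactly supported, let λ, σ ∈ ℝ, and define ν := 2λσ² ∭_{(ℝ²)³} ∂ₜρ(z₁) ρ(z₂) (x₁ − x₂ − x₃) G(z₃) G''(z₁ − z₂ − z₃) dz₁ dz₂ dz₃, where x_i denotes the spatial component of z_i ∈ ℝ². If ρ(t, −x) = ρ(t, x) for all (t,x) ∈ ℝ², then ν = 0. -/
open MeasureTheory

/-- The 1-dimensional heat kernel `G(t,x) = 1_{t>0} e^{−x²/(4t)}/√(4πt)`. -/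
noncomputable def heatKernel (z : ℝ × ℝ) : ℝ :=
  if 0 < z.1 then Real.exp (-z.2 ^ 2 / (4 * z.1)) / Real.sqrt (4 * Real.pi * z.1) else 0

/-- The second spatial derivative `G'' = ∂ₓ²G` of the heat kernel. -/
noncomputable def heatKernelXX (z : ℝ × ℝ) : ℝ :=
  deriv (deriv (fun y => heatKernel (z.1, y))) z.2

lemma deriv_even {g : ℝ → ℝ} (hg : ∀ y, g (-y) = g y) (x : ℝ) :
    deriv g (-x) = -deriv g x := by
  have h : (fun y => g (-y)) = g := funext hg
  have := deriv_comp_neg (f := g) (x := x)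
  rw [h] at this
  linarith

lemma deriv_deriv_even {g : ℝ → ℝ} (hg : ∀ y, g (-y) = g y) (x : ℝ) :
    deriv (deriv g) (-x) = deriv (deriv g) x := by
  have h1 : (fun y => deriv g (-y)) = fun y => -deriv g y := funext (deriv_even hg)
  have := deriv_comp_neg (f := deriv g) (x := x)
  rw [h1] at this
  rw [deriv.fun_neg] at this
  linarith

lemma heatKernel_even (t x : ℝ) : heatKernel (t, -x) = heatKernel (t, x) := by
  simp [heatKernel, neg_sq]

lemma heatKernelXX_even (t x : ℝ) : heatKernelXX (t, -x) = heatKernelXX (t, x) := by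
  exact deriv_deriv_even (fun y => heatKernel_even t y) x

/-- change of variables `x ↦ -x` in the space component. -/
lemma integral_comp_negx (f : ℝ × ℝ → ℝ) :
    ∫ z : ℝ × ℝ, f (z.1, -z.2) = ∫ z : ℝ × ℝ, f z := by
  let e : (ℝ × ℝ) ≃ᵐ (ℝ × ℝ) :=
    (MeasurableEquiv.refl ℝ).prodCongr (Homeomorph.neg ℝ).toMeasurableEquiv
  have hcoe : ⇑e = fun z : ℝ × ℝ => (z.1, -z.2) := by funext z; rfl
  have hmp : MeasurePreserving (fun z : ℝ × ℝ => (z.1, -z.2)) volume volume := by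
    rw [MeasureTheory.Measure.volume_eq_prod]
    exact (MeasurePreserving.id volume).prod (Measure.measurePreserving_neg volume)
  have hemb : MeasurableEmbedding (fun z : ℝ × ℝ => (z.1, -z.2)) :=
    hcoe ▸ e.measurableEmbedding
  exact hmp.integral_comp hemb f

/-- For mollifiers that are even in the spatial variable, the speed `ν`
of the moving frame in the KPZ limit of the rescaled directed mean curvature flow
vanishes. -/
theorem stmt_7 (ρ : ℝ × ℝ → ℝ) (hρ : ContDiff ℝ (⊤ : ℕ∞) ρ) (hρc : HasCompactSupport ρ)
    (lam sig : ℝ) (ν : ℝ)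
    (hν : ν = 2 * lam * sig ^ 2 *
      ∫ z₁ : ℝ × ℝ, ∫ z₂ : ℝ × ℝ, ∫ z₃ : ℝ × ℝ,
        deriv (fun s => ρ (s, z₁.2)) z₁.1 * ρ z₂ * (z₁.2 - z₂.2 - z₃.2) * heatKernel z₃
          * heatKernelXX (z₁ - z₂ - z₃))
    (heven : ∀ t x : ℝ, ρ (t, -x) = ρ (t, x)) :
    ν = 0 := by
  set F : ℝ × ℝ → ℝ × ℝ → ℝ × ℝ → ℝ := fun z₁ z₂ z₃ =>
    deriv (fun s => ρ (s, z₁.2)) z₁.1 * ρ z₂ * (z₁.2 - z₂.2 - z₃.2) * heatKernel z₃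
      * heatKernelXX (z₁ - z₂ - z₃) with hF
  have key : ∀ z₁ z₂ z₃ : ℝ × ℝ,
      F (z₁.1, -z₁.2) (z₂.1, -z₂.2) (z₃.1, -z₃.2) = -F z₁ z₂ z₃ := by
    intro z₁ z₂ z₃
    have h1 : deriv (fun s => ρ (s, -z₁.2)) z₁.1 = deriv (fun s => ρ (s, z₁.2)) z₁.1 := by
      congr 1; funext s; exact heven s z₁.2
    have h2 : ρ (z₂.1, -z₂.2) = ρ z₂ := by
      have := heven z₂.1 z₂.2; rwa [show ((z₂.1 : ℝ), z₂.2) = z₂ from rfl] at this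
    have h3 : heatKernel (z₃.1, -z₃.2) = heatKernel z₃ := by
      have := heatKernel_even z₃.1 z₃.2; rwa [show ((z₃.1 : ℝ), z₃.2) = z₃ from rfl] at this
    have h4 : ((z₁.1, -z₁.2) : ℝ × ℝ) - (z₂.1, -z₂.2) - (z₃.1, -z₃.2)
        = ((z₁ - z₂ - z₃).1, -((z₁ - z₂ - z₃).2)) := by
      simp [Prod.ext_iff, Prod.sub_def]; ring
    have h5 : heatKernelXX ((z₁.1, -z₁.2) - (z₂.1, -z₂.2) - (z₃.1, -z₃.2))
        = heatKernelXX (z₁ - z₂ - z₃) := by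
      rw [h4, heatKernelXX_even]
    simp only [hF, h1, h2, h3, h5]
    ring
  have hI : (∫ z₁ : ℝ × ℝ, ∫ z₂ : ℝ × ℝ, ∫ z₃ : ℝ × ℝ, F z₁ z₂ z₃) = 0 := by
    have inner2 : ∀ z₁ z₂ : ℝ × ℝ,
        (∫ z₃ : ℝ × ℝ, F (z₁.1, -z₁.2) (z₂.1, -z₂.2) z₃)
          = -∫ z₃ : ℝ × ℝ, F z₁ z₂ z₃ := by
      intro z₁ z₂
      calc (∫ z₃ : ℝ × ℝ, F (z₁.1, -z₁.2) (z₂.1, -z₂.2) z₃)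
          = ∫ z₃ : ℝ × ℝ, F (z₁.1, -z₁.2) (z₂.1, -z₂.2) (z₃.1, -z₃.2) :=
            (integral_comp_negx _).symm
        _ = ∫ z₃ : ℝ × ℝ, -F z₁ z₂ z₃ := by
            congr 1; funext z₃; exact key z₁ z₂ z₃
        _ = -∫ z₃ : ℝ × ℝ, F z₁ z₂ z₃ := integral_neg _
    have inner1 : ∀ z₁ : ℝ × ℝ,
        (∫ z₂ : ℝ × ℝ, ∫ z₃ : ℝ × ℝ, F (z₁.1, -z₁.2) z₂ z₃)
          = -∫ z₂ : ℝ × ℝ, ∫ z₃ : ℝ × ℝ, F z₁ z₂ z₃ := by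
      intro z₁
      calc (∫ z₂ : ℝ × ℝ, ∫ z₃ : ℝ × ℝ, F (z₁.1, -z₁.2) z₂ z₃)
          = ∫ z₂ : ℝ × ℝ, ∫ z₃ : ℝ × ℝ, F (z₁.1, -z₁.2) (z₂.1, -z₂.2) z₃ :=
            (integral_comp_negx _).symm
        _ = ∫ z₂ : ℝ × ℝ, -∫ z₃ : ℝ × ℝ, F z₁ z₂ z₃ := by
            congr 1; funext z₂; exact inner2 z₁ z₂
        _ = -∫ z₂ : ℝ × ℝ, ∫ z₃ : ℝ × ℝ, F z₁ z₂ z₃ := integral_neg _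
    have step : (∫ z₁ : ℝ × ℝ, ∫ z₂ : ℝ × ℝ, ∫ z₃ : ℝ × ℝ, F z₁ z₂ z₃)
        = -∫ z₁ : ℝ × ℝ, ∫ z₂ : ℝ × ℝ, ∫ z₃ : ℝ × ℝ, F z₁ z₂ z₃ := by
      calc (∫ z₁ : ℝ × ℝ, ∫ z₂ : ℝ × ℝ, ∫ z₃ : ℝ × ℝ, F z₁ z₂ z₃)
          = ∫ z₁ : ℝ × ℝ, ∫ z₂ : ℝ × ℝ, ∫ z₃ : ℝ × ℝ, F (z₁.1, -z₁.2) z₂ z₃ :=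
            (integral_comp_negx _).symm
        _ = ∫ z₁ : ℝ × ℝ, -∫ z₂ : ℝ × ℝ, ∫ z₃ : ℝ × ℝ, F z₁ z₂ z₃ := by
            congr 1; funext z₁; exact inner1 z₁
        _ = -∫ z₁ : ℝ × ℝ, ∫ z₂ : ℝ × ℝ, ∫ z₃ : ℝ × ℝ, F z₁ z₂ z₃ := integral_neg _
    linarith
  rw [hν, hI, mul_zero]
end

section
/- Let m > 0 and L ≥ 0, and let R : ℝ → ℝ be seven times differentiable with R(0) = R'(0) = R''(0) = 0 and sup_{x∈ℝ} e^{−m|x|} |R^{(ℓ)}(x)| ≤ L for every 0 ≤ ℓ ≤ 7. Then for every ε̃ ∈ (0,1) there exists a constant C (depending only on m and ε̃) such that for all ε ∈ (0, ε̃], all 0 ≤ ℓ ≤ 7 and all u ∈ ℝ: e^{−m|u|} | (d/du)^ℓ ( ε^{−1} R(ε^{1/3} u) ) | ≤ C L. -/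
open Real Set

private lemma one_sided (f : ℝ → ℝ) (hf : Differentiable ℝ f) (h0 : f 0 = 0) (M : ℝ) (k : ℕ)
    (x : ℝ) (hx : 0 ≤ x) (hb : ∀ t ∈ Set.Icc 0 x, deriv f t ≤ M * t ^ k) :
    f x ≤ M * x ^ (k + 1) / ((k : ℝ) + 1) := by
  set g : ℝ → ℝ := fun t => M / ((k : ℝ) + 1) * t ^ (k + 1) - f t with hg_def
  have hg : ∀ t, HasDerivAt g (M * t ^ k - deriv f t) t := by
    intro t
    have h1 : HasDerivAt (fun s : ℝ => M / ((k : ℝ) + 1) * s ^ (k + 1)) (M * t ^ k) t := by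
      have h1' := HasDerivAt.const_mul (M / ((k : ℝ) + 1)) (hasDerivAt_pow (k + 1) t)
      refine h1'.congr_deriv ?_
      have hk : ((k : ℝ) + 1) ≠ 0 := by positivity
      push_cast [Nat.add_sub_cancel]
      rw [← mul_assoc, div_mul_cancel₀ M hk]
    exact h1.sub (hf t).hasDerivAt
  have mono : MonotoneOn g (Set.Icc 0 x) := by
    apply monotoneOn_of_deriv_nonneg (convex_Icc 0 x)
    · intro t _; exact (hg t).continuousAt.continuousWithinAt
    · intro t _; exact (hg t).differentiableAt.differentiableWithinAt
    · intro t ht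
      rw [(hg t).deriv]
      rw [interior_Icc] at ht
      have := hb t ⟨ht.1.le, ht.2.le⟩
      linarith
  have h01 : (0 : ℝ) ∈ Set.Icc 0 x := ⟨le_refl 0, hx⟩
  have hx1 : x ∈ Set.Icc 0 x := ⟨hx, le_refl x⟩
  have hmono := mono h01 hx1 hx
  have hg0 : g 0 = 0 := by simp [hg_def, h0]
  have hgx : g x = M / ((k : ℝ) + 1) * x ^ (k + 1) - f x := rfl
  have heq : M / ((k : ℝ) + 1) * x ^ (k + 1) = M * x ^ (k + 1) / ((k : ℝ) + 1) := by ring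
  rw [hg0, hgx] at hmono
  linarith

private lemma two_sided (f : ℝ → ℝ) (hf : Differentiable ℝ f) (h0 : f 0 = 0) (M : ℝ) (k : ℕ)
    (x : ℝ) (hx : 0 ≤ x) (hb : ∀ t ∈ Set.Icc 0 x, |deriv f t| ≤ M * t ^ k) :
    |f x| ≤ M * x ^ (k + 1) / ((k : ℝ) + 1) := by
  have h1 := one_sided f hf h0 M k x hx (fun t ht => (abs_le.mp (hb t ht)).2)
  have h2 : -f x ≤ M * x ^ (k + 1) / ((k : ℝ) + 1) := by
    have := one_sided (fun t => -f t) hf.neg (by simp [h0]) M k x hx (fun t ht => by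
      rw [deriv.fun_neg]
      have := (abs_le.mp (hb t ht)).1
      linarith)
    simpa using this
  exact abs_le.mpr ⟨by linarith, h1⟩

private lemma abs_le_of_mem_uIcc {t x : ℝ} (ht : t ∈ Set.uIcc 0 x) : |t| ≤ |x| := by
  rcases Set.mem_uIcc.mp ht with ⟨ha, hb⟩ | ⟨ha, hb⟩
  · exact abs_le.mpr ⟨by linarith [abs_nonneg x], hb.trans (le_abs_self x)⟩
  · exact abs_le.mpr ⟨(neg_abs_le x).trans ha, by linarith [abs_nonneg x]⟩

private lemma absKey (f : ℝ → ℝ) (hf : Differentiable ℝ f) (h0 : f 0 = 0) (M : ℝ) (k : ℕ)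
    (x : ℝ) (hb : ∀ t ∈ Set.uIcc 0 x, |deriv f t| ≤ M * |t| ^ k) :
    |f x| ≤ M * |x| ^ (k + 1) / ((k : ℝ) + 1) := by
  rcases le_or_gt 0 x with hx | hx
  · have hb' : ∀ t ∈ Set.Icc 0 x, |deriv f t| ≤ M * t ^ k := by
      intro t ht
      have := hb t (by rw [Set.uIcc_of_le hx]; exact ht)
      rwa [abs_of_nonneg ht.1] at this
    have := two_sided f hf h0 M k x hx hb'
    rwa [abs_of_nonneg hx]
  · have hFd : Differentiable ℝ (fun t => f (-t)) := hf.comp differentiable_neg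
    have hF0 : (fun t => f (-t)) 0 = 0 := by simp [h0]
    have hb' : ∀ t ∈ Set.Icc 0 (-x), |deriv (fun t => f (-t)) t| ≤ M * t ^ k := by
      intro t ht
      rw [deriv_comp_neg f t, abs_neg]
      have hmem : -t ∈ Set.uIcc 0 x := by
        rw [Set.uIcc_of_ge hx.le]
        exact ⟨by linarith [ht.2], by linarith [ht.1]⟩
      have := hb (-t) hmem
      rwa [abs_neg, abs_of_nonneg ht.1] at this
    have h := two_sided (fun t => f (-t)) hFd hF0 M k (-x) (by linarith) hb'
    simp only [neg_neg] at h
    rwa [abs_of_neg hx]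

private lemma iteratedDeriv_cmul (c : ℝ) (f : ℝ → ℝ) (n : ℕ) :
    iteratedDeriv n (fun x => c * f x) = fun x => c * iteratedDeriv n f x := by
  induction n with
  | zero => simp
  | succ n ih =>
    funext x
    rw [iteratedDeriv_succ, ih, iteratedDeriv_succ]
    exact deriv_const_mul_field c

private lemma chain7' (R : ℝ → ℝ) (hdiff : ∀ k : ℕ, k ≤ 6 → Differentiable ℝ (iteratedDeriv k R))
    (a : ℝ) (ℓ : ℕ) (hℓ : ℓ ≤ 7) :
    iteratedDeriv ℓ (fun v => R (a * v)) = fun u => a ^ ℓ * iteratedDeriv ℓ R (a * u) := by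
  have hR6 : ContDiff ℝ 6 R :=
    contDiff_of_differentiable_iteratedDeriv (fun k hk => hdiff k (by exact_mod_cast hk))
  rcases Nat.lt_or_ge ℓ 7 with h | h
  · have h6 : ℓ ≤ 6 := by omega
    exact iteratedDeriv_comp_const_mul (hR6.of_le (by exact_mod_cast h6)) a
  · have hℓ7 : ℓ = 7 := le_antisymm hℓ h
    subst hℓ7
    have h6 : iteratedDeriv 6 (fun v => R (a * v)) = fun u => a ^ 6 * iteratedDeriv 6 R (a * u) :=
      iteratedDeriv_comp_const_mul (hR6.of_le (by norm_num)) a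
    funext u
    rw [iteratedDeriv_succ, h6]
    have h1 : HasDerivAt (fun u : ℝ => a * u) a u := by
      simpa using (hasDerivAt_id u).const_mul a
    have hd : HasDerivAt (fun u : ℝ => iteratedDeriv 6 R (a * u))
        (deriv (iteratedDeriv 6 R) (a * u) * a) u :=
      ((hdiff 6 le_rfl (a * u)).hasDerivAt).comp u h1
    rw [deriv_const_mul_field (a ^ 6), hd.deriv,
      show iteratedDeriv 7 R = deriv (iteratedDeriv 6 R) from iteratedDeriv_succ]
    ring

private lemma chain7 (R : ℝ → ℝ) (hdiff : ∀ k : ℕ, k ≤ 6 → Differentiable ℝ (iteratedDeriv k R))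
    (c a : ℝ) (ℓ : ℕ) (hℓ : ℓ ≤ 7) :
    iteratedDeriv ℓ (fun v => c * R (a * v)) = fun u => c * (a ^ ℓ * iteratedDeriv ℓ R (a * u)) := by
  calc iteratedDeriv ℓ (fun v => c * R (a * v))
      = fun x => c * iteratedDeriv ℓ (fun v => R (a * v)) x :=
        iteratedDeriv_cmul c (fun v => R (a * v)) ℓ
    _ = fun u => c * (a ^ ℓ * iteratedDeriv ℓ R (a * u)) := by
        funext x; rw [chain7' R hdiff a ℓ hℓ]

/-- If `R` vanishes to third order at `0` and has weighted norm
`‖R‖_{m,7} ≤ L`, then the rescaled functions `u ↦ ε⁻¹ R(ε^{1/3} u)` have weighted norm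
`‖·‖_{m,7}` bounded by `C·L` uniformly over `ε ∈ (0, ε̃]`. -/
theorem stmt_12 (m L : ℝ) (hm : 0 < m) (hL : 0 ≤ L) (R : ℝ → ℝ)
    (hdiff : ∀ k : ℕ, k ≤ 6 → Differentiable ℝ (iteratedDeriv k R))
    (h0 : R 0 = 0) (h1 : deriv R 0 = 0) (h2 : iteratedDeriv 2 R 0 = 0)
    (hbound : ∀ ℓ : ℕ, ℓ ≤ 7 → ∀ x : ℝ,
      Real.exp (-m * |x|) * |iteratedDeriv ℓ R x| ≤ L) :
    ∀ εt : ℝ, 0 < εt → εt < 1 →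
      ∃ C : ℝ, ∀ ε : ℝ, 0 < ε → ε ≤ εt → ∀ ℓ : ℕ, ℓ ≤ 7 → ∀ u : ℝ,
        Real.exp (-m * |u|)
            * |iteratedDeriv ℓ (fun v : ℝ => ε⁻¹ * R (ε ^ ((1 : ℝ) / 3) * v)) u|
          ≤ C * L := by
  intro εt hεt0 hεt1
  -- pointwise exponential bounds on the derivatives
  have hBnd : ∀ ℓ : ℕ, ℓ ≤ 7 → ∀ y : ℝ, |iteratedDeriv ℓ R y| ≤ L * Real.exp (m * |y|) := by
    intro ℓ hℓ y
    have h := hbound ℓ hℓ y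
    rw [neg_mul, Real.exp_neg] at h
    calc |iteratedDeriv ℓ R y|
        = Real.exp (m * |y|) * ((Real.exp (m * |y|))⁻¹ * |iteratedDeriv ℓ R y|) := by
          field_simp
      _ ≤ Real.exp (m * |y|) * L := mul_le_mul_of_nonneg_left h (Real.exp_pos _).le
      _ = L * Real.exp (m * |y|) := mul_comm _ _
  have hexp_mono : ∀ {s t : ℝ}, |s| ≤ |t| → Real.exp (m * |s|) ≤ Real.exp (m * |t|) := by
    intro s t hst
    exact Real.exp_le_exp.mpr (mul_le_mul_of_nonneg_left hst hm.le)
  -- Taylor-type bounds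
  have e23 : deriv (iteratedDeriv 2 R) = iteratedDeriv 3 R := (iteratedDeriv_succ).symm
  have e12 : deriv (deriv R) = iteratedDeriv 2 R := by
    rw [show iteratedDeriv 2 R = deriv (iteratedDeriv 1 R) from iteratedDeriv_succ,
      iteratedDeriv_one]
  have T2 : ∀ y : ℝ, |iteratedDeriv 2 R y| ≤ L * Real.exp (m * |y|) * |y| := by
    intro y
    have h := absKey (iteratedDeriv 2 R) (hdiff 2 (by norm_num)) h2
      (L * Real.exp (m * |y|)) 0 y (fun t ht => by
        rw [e23]
        simp only [pow_zero, mul_one]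
        calc |iteratedDeriv 3 R t| ≤ L * Real.exp (m * |t|) := hBnd 3 (by norm_num) t
          _ ≤ L * Real.exp (m * |y|) :=
              mul_le_mul_of_nonneg_left (hexp_mono (abs_le_of_mem_uIcc ht)) hL)
    simpa using h
  have T1 : ∀ y : ℝ, |deriv R y| ≤ L * Real.exp (m * |y|) * y ^ 2 / 2 := by
    intro y
    have hd1 : Differentiable ℝ (deriv R) := by
      have := hdiff 1 (by norm_num); rwa [iteratedDeriv_one] at this
    have h := absKey (deriv R) hd1 h1 (L * Real.exp (m * |y|)) 1 y (fun t ht => by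
      rw [e12]
      calc |iteratedDeriv 2 R t| ≤ L * Real.exp (m * |t|) * |t| := T2 t
        _ ≤ L * Real.exp (m * |y|) * |t| ^ 1 := by
            rw [pow_one]
            exact mul_le_mul_of_nonneg_right
              (mul_le_mul_of_nonneg_left (hexp_mono (abs_le_of_mem_uIcc ht)) hL) (abs_nonneg t))
    norm_num at h
    exact h
  have T0 : ∀ y : ℝ, |R y| ≤ L * Real.exp (m * |y|) * |y| ^ 3 / 6 := by
    intro y
    have hd0 : Differentiable ℝ R := by
      have := hdiff 0 (by norm_num); rwa [iteratedDeriv_zero] at this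
    have h := absKey R hd0 h0 (L * Real.exp (m * |y|) / 2) 2 y (fun t ht => by
      calc |deriv R t| ≤ L * Real.exp (m * |t|) * t ^ 2 / 2 := T1 t
        _ ≤ L * Real.exp (m * |y|) / 2 * |t| ^ 2 := by
            rw [← sq_abs t]
            have := mul_le_mul_of_nonneg_right
              (mul_le_mul_of_nonneg_left (hexp_mono (abs_le_of_mem_uIcc ht)) hL)
              (sq_nonneg (|t|))
            calc L * Real.exp (m * |t|) * |t| ^ 2 / 2 = L * Real.exp (m * |t|) * |t| ^ 2 / 2 := rfl
              _
                ≤ L * Real.exp (m * |y|) * |t| ^ 2 / 2 := by linarith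
              _ = L * Real.exp (m * |y|) / 2 * |t| ^ 2 := by ring)
    norm_num at h
    calc |R y| ≤ L * Real.exp (m * |y|) / 2 * |y| ^ 3 / 3 := h
      _ = L * Real.exp (m * |y|) * |y| ^ 3 / 6 := by ring
  -- unified Taylor bound
  have T : ∀ ℓ : ℕ, ℓ ≤ 7 → ∀ y : ℝ, |iteratedDeriv ℓ R y| ≤
      L * Real.exp (m * |y|) * |y| ^ (3 - ℓ) / ((3 - ℓ).factorial : ℝ) := by
    intro ℓ hℓ y
    match ℓ with
    | 0 => simpa [iteratedDeriv_zero, Nat.factorial] using T0 y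
    | 1 => simpa [iteratedDeriv_one, Nat.factorial, sq_abs] using T1 y
    | 2 => simpa [Nat.factorial] using T2 y
    | (n + 3) => simpa [Nat.factorial] using hBnd (n + 3) hℓ y
  -- set up constants
  have ha0pos : (0 : ℝ) < εt ^ ((1 : ℝ) / 3) := Real.rpow_pos_of_pos hεt0 _
  have ha0lt : εt ^ ((1 : ℝ) / 3) < 1 := Real.rpow_lt_one hεt0.le hεt1 (by norm_num)
  set a0 := εt ^ ((1 : ℝ) / 3) with ha0_def
  set K := m * (1 - a0) with hK_def
  have hKpos : 0 < K := mul_pos hm (by linarith)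
  refine ⟨(max 1 K⁻¹) ^ 3, ?_⟩
  intro ε hε hεεt ℓ hℓ u
  set a := ε ^ ((1 : ℝ) / 3) with ha_def
  have hapos : 0 < a := Real.rpow_pos_of_pos hε _
  have haa0 : a ≤ a0 := Real.rpow_le_rpow hε.le hεεt (by norm_num)
  have ha1 : a ≤ 1 := by linarith
  have ha3 : a ^ (3 : ℕ) = ε := by
    rw [ha_def, ← Real.rpow_natCast (ε ^ ((1 : ℝ) / 3)) 3, ← Real.rpow_mul hε.le]
    norm_num
  have hch : iteratedDeriv ℓ (fun v : ℝ => ε⁻¹ * R (a * v)) u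
      = ε⁻¹ * (a ^ ℓ * iteratedDeriv ℓ R (a * u)) := by
    rw [chain7 R hdiff ε⁻¹ a ℓ hℓ]
  rw [hch]
  set j := 3 - ℓ with hj_def
  have hj3 : j ≤ 3 := by omega
  have hlj : 3 ≤ ℓ + j := by omega
  have hTa := T ℓ hℓ (a * u)
  rw [← hj_def] at hTa
  have hau : |a * u| = a * |u| := by rw [abs_mul, abs_of_pos hapos]
  have hE : ε⁻¹ * a ^ (ℓ + j) ≤ 1 := by
    have hsplit : a ^ (ℓ + j) = ε * a ^ (ℓ + j - 3) := by
      rw [← ha3, ← pow_add]; congr 1; omega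
    rw [hsplit]
    have hone : a ^ (ℓ + j - 3) ≤ 1 := pow_le_one₀ hapos.le ha1
    calc ε⁻¹ * (ε * a ^ (ℓ + j - 3)) = a ^ (ℓ + j - 3) := by field_simp
      _ ≤ 1 := hone
  have hfact : (0 : ℝ) < (j.factorial : ℝ) := by positivity
  have hJ : Real.exp (-m * |u|) * (|u| ^ j * Real.exp (m * (a * |u|)))
      ≤ (j.factorial : ℝ) * (max 1 K⁻¹) ^ 3 := by
    have hex1 : Real.exp (-m * |u|) * Real.exp (m * (a * |u|)) ≤ Real.exp (-(K * |u|)) := by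
      rw [← Real.exp_add]
      apply Real.exp_le_exp.mpr
      have hmu : m * (a * |u|) ≤ m * (a0 * |u|) :=
        mul_le_mul_of_nonneg_left (mul_le_mul_of_nonneg_right haa0 (abs_nonneg u)) hm.le
      rw [hK_def]
      nlinarith [abs_nonneg u]
    have hex2 : |u| ^ j ≤ (j.factorial : ℝ) * K⁻¹ ^ j * Real.exp (K * |u|) := by
      have h3 := Real.pow_div_factorial_le_exp (K * |u|) (by positivity) j
      rw [mul_pow, div_le_iff₀ hfact] at h3
      calc |u| ^ j = K⁻¹ ^ j * (K ^ j * |u| ^ j) := by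
            rw [← mul_assoc, ← mul_pow, inv_mul_cancel₀ hKpos.ne', one_pow, one_mul]
        _ ≤ K⁻¹ ^ j * (Real.exp (K * |u|) * (j.factorial : ℝ)) :=
            mul_le_mul_of_nonneg_left h3 (by positivity)
        _ = (j.factorial : ℝ) * K⁻¹ ^ j * Real.exp (K * |u|) := by ring
    have hinv3 : K⁻¹ ^ j ≤ (max 1 K⁻¹) ^ 3 := by
      calc K⁻¹ ^ j ≤ (max 1 K⁻¹) ^ j :=
            pow_le_pow_left₀ (inv_nonneg.mpr hKpos.le) (le_max_right _ _) j
        _ ≤ (max 1 K⁻¹) ^ 3 := pow_le_pow_right₀ (le_max_left _ _) hj3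
    have hee : Real.exp (K * |u|) * Real.exp (-(K * |u|)) = 1 := by
      rw [← Real.exp_add]; simp
    calc Real.exp (-m * |u|) * (|u| ^ j * Real.exp (m * (a * |u|)))
        = |u| ^ j * (Real.exp (-m * |u|) * Real.exp (m * (a * |u|))) := by ring
      _ ≤ ((j.factorial : ℝ) * K⁻¹ ^ j * Real.exp (K * |u|)) * Real.exp (-(K * |u|)) :=
          mul_le_mul hex2 hex1 (by positivity) (by positivity)
      _ = (j.factorial : ℝ) * K⁻¹ ^ j * (Real.exp (K * |u|) * Real.exp (-(K * |u|))) := by ring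
      _ = (j.factorial : ℝ) * K⁻¹ ^ j := by rw [hee, mul_one]
      _ ≤ (j.factorial : ℝ) * (max 1 K⁻¹) ^ 3 :=
          mul_le_mul_of_nonneg_left hinv3 hfact.le
  calc Real.exp (-m * |u|) * |ε⁻¹ * (a ^ ℓ * iteratedDeriv ℓ R (a * u))|
      = Real.exp (-m * |u|) * (ε⁻¹ * a ^ ℓ * |iteratedDeriv ℓ R (a * u)|) := by
        rw [abs_mul, abs_mul, abs_of_pos (inv_pos.mpr hε), abs_of_pos (pow_pos hapos ℓ)]
        ring
    _ ≤ Real.exp (-m * |u|) * (ε⁻¹ * a ^ ℓ *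
          (L * Real.exp (m * |a * u|) * |a * u| ^ j / (j.factorial : ℝ))) := by
        have hP : 0 ≤ Real.exp (-m * |u|) * (ε⁻¹ * a ^ ℓ) := by positivity
        calc Real.exp (-m * |u|) * (ε⁻¹ * a ^ ℓ * |iteratedDeriv ℓ R (a * u)|)
            = Real.exp (-m * |u|) * (ε⁻¹ * a ^ ℓ) * |iteratedDeriv ℓ R (a * u)| := by ring
          _ ≤ Real.exp (-m * |u|) * (ε⁻¹ * a ^ ℓ) *
                (L * Real.exp (m * |a * u|) * |a * u| ^ j / (j.factorial : ℝ)) :=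
              mul_le_mul_of_nonneg_left hTa hP
          _ = _ := by ring
    _ = (L / (j.factorial : ℝ)) * ((ε⁻¹ * a ^ (ℓ + j)) *
          (Real.exp (-m * |u|) * (|u| ^ j * Real.exp (m * (a * |u|))))) := by
        rw [hau, mul_pow, pow_add]
        ring
    _ ≤ (L / (j.factorial : ℝ)) * (1 * ((j.factorial : ℝ) * (max 1 K⁻¹) ^ 3)) := by
        apply mul_le_mul_of_nonneg_left _ (by positivity)
        exact mul_le_mul hE hJ (by positivity) (by norm_num)
    _ = (max 1 K⁻¹) ^ 3 * L := by
        field_simp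
end

section
/- Let m > 0. (i) If F₁ : ℝ → ℝ is of class C⁷ with ‖F₁‖_{m,7} < ∞ and F₁(0) = F₁'(0) = 0, then, setting F_{1,ε}(u) := ε^{−2/3} F₁(ε^{1/3} u), one has ‖F_{1,ε} − (1/2)F₁''(0)(·)²‖_{m,7} → 0 as ε → 0⁺. (ii) If F₂ : ℝ → ℝ is of class C⁷ with ‖F₂‖_{m,7} < ∞ and F₂'(0) = 0, then, setting F_{2,ε}(u) := ε^{−2/3}(F₂(ε^{1/3}u) − F₂(0))·u, one has ‖F_{2,ε} − (1/2)F₂''(0)(·)³‖_{m,7} → 0 as ε → 0⁺. (iii) If F₃ : ℝ → ℝ is of class C⁷ with ‖F₃‖_{m,7} < ∞ and F₃'(0) = F₃'''(0) = 0, then, setting F_{3,ε}(u) := ε^{−4/3}(F₃(ε^{1/3}u) − F₃(0) − (1/2)F₃''(0)ε^{2/3}u²), one has ‖F_{3,ε} − (1/24)F₃⁽⁴⁾(0)(·)⁴‖_{m,7} → 0 as ε → 0⁺. -/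
/-!
Write `a = ε^{1/3}`. Each difference `F_{i,ε} − limit` is (up to the factor `u` in (ii)) the
rescaled Taylor remainder `a^{-n} R(a u)`, where `R = F − T_n F` vanishes to order `n` at `0`
and `R^{(k)} = F^{(k)}` for `k > n`. Integrating `R^{(n+1)}` back from `0` gives
`|R^{(ℓ)}(y)| ≤ L |y|^{n+1-ℓ} e^{m|y|}` for `ℓ ≤ n + 1`, so the `ℓ`-th derivative of the
rescaled remainder is `O(a (1 + |u|)^{n+1} e^{m a |u|})`. For `a ≤ 1/2` the weight `e^{-m|u|}`
absorbs the polynomial factor, and `‖F_{i,ε} − limit‖_{m,N} = O(ε^{1/3})`.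
-/

open Real Finset

noncomputable def taylorPolyZero (F : ℝ → ℝ) (n : ℕ) (z : ℝ) : ℝ :=
  ∑ j ∈ range (n + 1), iteratedDeriv j F 0 / j.factorial * z ^ j

/-- `‖F‖_{m,N} ≤ L`. -/
def WeightedNormLE (m : ℝ) (N : ℕ) (F : ℝ → ℝ) (L : ℝ) : Prop :=
  ∀ ℓ : ℕ, ℓ ≤ N → ∀ x : ℝ, exp (-m * |x|) * |iteratedDeriv ℓ F x| ≤ L

/-- `‖f ε‖_{m,N} → 0` as `ε → 0⁺`. -/
def WeightedNormTendstoZero (m : ℝ) (N : ℕ) (f : ℝ → ℝ → ℝ) : Prop :=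
  ∀ δ : ℝ, 0 < δ → ∃ ε₀ : ℝ, 0 < ε₀ ∧
    ∀ ε : ℝ, 0 < ε → ε ≤ ε₀ → WeightedNormLE m N (f ε) δ

section TaylorPoly

variable {F : ℝ → ℝ} {n k : ℕ}

theorem contDiff_taylorPolyZero (F : ℝ → ℝ) (n : ℕ) :
    ContDiff ℝ ⊤ (taylorPolyZero F n) := by
  unfold taylorPolyZero
  fun_prop

theorem iteratedDeriv_taylorPolyZero (F : ℝ → ℝ) (n k : ℕ) (x : ℝ) :
    iteratedDeriv k (taylorPolyZero F n) x =
      ∑ j ∈ range (n + 1), iteratedDeriv j F 0 / j.factorial * iteratedDeriv k (· ^ j) x := by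
  unfold taylorPolyZero
  rw [iteratedDeriv_fun_sum (fun j _ => by fun_prop)]
  simp only [iteratedDeriv_const_mul_field]

theorem iteratedDeriv_taylorPolyZero_zero (hk : k ≤ n) :
    iteratedDeriv k (taylorPolyZero F n) 0 = iteratedDeriv k F 0 := by
  rw [iteratedDeriv_taylorPolyZero]
  simp only [iteratedDeriv_fun_pow_zero, Nat.cast_ite, Nat.cast_zero, mul_ite, mul_zero]
  rw [sum_ite_eq (range (n + 1)) k, if_pos (mem_range.2 (by omega))]
  field_simp

theorem iteratedDeriv_taylorPolyZero_of_lt (hk : n < k) (x : ℝ) :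
    iteratedDeriv k (taylorPolyZero F n) x = 0 := by
  rw [iteratedDeriv_taylorPolyZero]
  refine sum_eq_zero fun j hj => ?_
  rw [iteratedDeriv_pow, Nat.descFactorial_eq_zero_iff_lt.2 (by simp at hj; omega)]
  simp

theorem iteratedDeriv_sub_taylorPolyZero {N : ℕ} (hF : ContDiff ℝ N F) (hk : k ≤ N)
    (x : ℝ) :
    iteratedDeriv k (fun z => F z - taylorPolyZero F n z) x =
      iteratedDeriv k F x - iteratedDeriv k (taylorPolyZero F n) x :=
  iteratedDeriv_fun_sub ((hF.of_le (by exact_mod_cast hk)).contDiffAt)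
    ((contDiff_taylorPolyZero F n).contDiffAt.of_le le_top)

theorem taylorPolyZero_two (F : ℝ → ℝ) (z : ℝ) :
    taylorPolyZero F 2 z = F 0 + deriv F 0 * z + iteratedDeriv 2 F 0 / 2 * z ^ 2 := by
  simp [taylorPolyZero, sum_range_succ]

theorem taylorPolyZero_four (F : ℝ → ℝ) (z : ℝ) :
    taylorPolyZero F 4 z = taylorPolyZero F 2 z + iteratedDeriv 3 F 0 / 6 * z ^ 3
      + iteratedDeriv 4 F 0 / 24 * z ^ 4 := by
  simp [taylorPolyZero, sum_range_succ, Nat.factorial]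

end TaylorPoly

theorem abs_iteratedDeriv_le_mul_pow_of_iteratedDeriv_zero {G : ℝ → ℝ} {n : ℕ}
    (hG : ContDiff ℝ n G) (h0 : ∀ k < n, iteratedDeriv k G 0 = 0) {x C : ℝ}
    (hC : ∀ t, |t| ≤ |x| → |iteratedDeriv n G t| ≤ C) {k : ℕ} (hk : k ≤ n) :
    |iteratedDeriv k G x| ≤ C * |x| ^ (n - k) := by
  have hC0 : 0 ≤ C := (abs_nonneg _).trans (hC 0 (by simp))
  suffices key : ∀ j ≤ n, ∀ t ∈ Metric.closedBall (0 : ℝ) |x|,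
      |iteratedDeriv (n - j) G t| ≤ C * |x| ^ j by
    simpa [Nat.sub_sub_self hk] using key (n - k) (by omega) x (by simp)
  intro j
  induction j with
  | zero => intro _ t ht; simpa using hC t (by simpa using ht)
  | succ j ih =>
    intro hj t ht
    have hdiff : Differentiable ℝ (iteratedDeriv (n - (j + 1)) G) :=
      hG.differentiable_iteratedDeriv _ (by exact_mod_cast (by omega : n - (j + 1) < n))
    have hderiv : deriv (iteratedDeriv (n - (j + 1)) G) = iteratedDeriv (n - j) G := by
      rw [← iteratedDeriv_succ]; congr 1; omega
    have hmvt := (convex_closedBall (0 : ℝ) |x|).norm_image_sub_le_of_norm_deriv_le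
      (fun s _ => hdiff s) (fun s hs => by rw [hderiv]; exact ih (by omega) s hs)
      (Metric.mem_closedBall_self (abs_nonneg x)) ht
    rw [h0 _ (by omega), sub_zero, sub_zero] at hmvt
    have ht' : |t| ≤ |x| := by simpa using ht
    calc |iteratedDeriv (n - (j + 1)) G t| ≤ C * |x| ^ j * |t| := hmvt
      _ ≤ C * |x| ^ j * |x| := by gcongr
      _ = C * |x| ^ (j + 1) := by ring

theorem one_add_pow_mul_exp_neg_le {c : ℝ} (hc : 0 < c) (J : ℕ) {t : ℝ} (ht : 0 ≤ t) :
    (1 + t) ^ J * exp (-(c * t)) ≤ J.factorial / c ^ J * exp c := by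
  have h := pow_div_factorial_le_exp (c * (1 + t)) (by positivity) J
  rw [div_le_iff₀ (by positivity), mul_pow] at h
  have he : exp (c * (1 + t)) = exp c * exp (c * t) := by rw [← exp_add]; ring_nf
  rw [he] at h
  rw [div_mul_eq_mul_div, le_div_iff₀ (by positivity), exp_neg]
  calc (1 + t) ^ J * (exp (c * t))⁻¹ * c ^ J
      = c ^ J * (1 + t) ^ J * (exp (c * t))⁻¹ := by ring
    _ ≤ exp c * exp (c * t) * J.factorial * (exp (c * t))⁻¹ := by gcongr
    _ = J.factorial * exp c := by field_simp

section FlatRescaling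

variable {m L : ℝ} {N n : ℕ} {G : ℝ → ℝ}

theorem pow_mul_abs_iteratedDeriv_comp_mul_le (hG : ContDiff ℝ N G) (hn : n < N)
    (h0 : ∀ k ≤ n, iteratedDeriv k G 0 = 0)
    (hb : ∀ k, n < k → k ≤ N → ∀ x, |iteratedDeriv k G x| ≤ L * exp (m * |x|))
    (hm : 0 ≤ m)
    {a : ℝ} (ha0 : 0 < a) (ha1 : a ≤ 1) {ℓ : ℕ} (hℓ : ℓ ≤ N) (u : ℝ) :
    a ^ ℓ * |iteratedDeriv ℓ G (a * u)| ≤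
      a ^ (n + 1) * (L * exp (m * (a * |u|)) * (1 + |u|) ^ (n + 1)) := by
  have hL : 0 ≤ L := by simpa using (abs_nonneg _).trans (hb (n + 1) (by omega) hn 0)
  have hau : |a * u| = a * |u| := by rw [abs_mul, abs_of_pos ha0]
  have hbau : ∀ k, n < k → k ≤ N → ∀ t, |t| ≤ |a * u| →
      |iteratedDeriv k G t| ≤ L * exp (m * (a * |u|)) := by
    intro k hk hkN t ht
    rw [← hau]
    exact (hb k hk hkN t).trans (by gcongr)
  have hu1 : 1 ≤ 1 + |u| := by linarith [abs_nonneg u]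
  rcases le_or_gt ℓ (n + 1) with hℓn | hℓn
  · have h := abs_iteratedDeriv_le_mul_pow_of_iteratedDeriv_zero
      (hG.of_le (by exact_mod_cast hn)) (fun k hk => h0 k (by omega))
      (hbau (n + 1) (by omega) hn) hℓn
    rw [hau, mul_pow] at h
    calc a ^ ℓ * |iteratedDeriv ℓ G (a * u)|
        ≤ a ^ ℓ * (L * exp (m * (a * |u|)) * (a ^ (n + 1 - ℓ) * |u| ^ (n + 1 - ℓ))) := by
          gcongr
      _ = a ^ (n + 1) * (L * exp (m * (a * |u|)) * |u| ^ (n + 1 - ℓ)) := by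
        rw [← pow_mul_pow_sub a hℓn]; ring
      _ ≤ a ^ (n + 1) * (L * exp (m * (a * |u|)) * (1 + |u|) ^ (n + 1)) := by
        gcongr
        calc |u| ^ (n + 1 - ℓ) ≤ (1 + |u|) ^ (n + 1 - ℓ) := by gcongr; linarith
          _ ≤ (1 + |u|) ^ (n + 1) := pow_le_pow_right₀ hu1 (by omega)
  · have h := hbau ℓ (by omega) hℓ (a * u) le_rfl
    calc a ^ ℓ * |iteratedDeriv ℓ G (a * u)|
        ≤ a ^ (n + 1) * (L * exp (m * (a * |u|)) * 1) := by
          rw [mul_one]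
          exact mul_le_mul (pow_le_pow_of_le_one ha0.le ha1 hℓn.le) h (abs_nonneg _)
            (by positivity)
      _ ≤ a ^ (n + 1) * (L * exp (m * (a * |u|)) * (1 + |u|) ^ (n + 1)) := by
          gcongr; exact one_le_pow₀ hu1

theorem exists_weighted_iteratedDeriv_rescale_le (hG : ContDiff ℝ N G) (hn : n < N)
    (h0 : ∀ k ≤ n, iteratedDeriv k G 0 = 0)
    (hb : ∃ L, ∀ k, n < k → k ≤ N → ∀ x, |iteratedDeriv k G x| ≤ L * exp (m * |x|))
    (hm : 0 < m) (e : ℕ) :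
    ∃ K, ∀ a, 0 < a → a ≤ 1 / 2 → ∀ ℓ ≤ N, ∀ u, exp (-m * |u|) *
      (|u| ^ e * |iteratedDeriv ℓ (fun v => G (a * v) / a ^ n) u|) ≤ a * K := by
  obtain ⟨L, hb⟩ := hb
  have hL : 0 ≤ L := by simpa using (abs_nonneg _).trans (hb (n + 1) (by omega) hn 0)
  refine ⟨L * ((n + 1 + e).factorial / (m / 2) ^ (n + 1 + e) * exp (m / 2)), ?_⟩
  intro a ha0 ha ℓ hℓ u
  have hderiv : iteratedDeriv ℓ (fun v => G (a * v) / a ^ n) u =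
      a ^ ℓ * iteratedDeriv ℓ G (a * u) / a ^ n := by
    rw [iteratedDeriv_div_const, iteratedDeriv_comp_const_mul (hG.of_le (by exact_mod_cast hℓ))]
  have hA := pow_mul_abs_iteratedDeriv_comp_mul_le hG hn h0 hb hm.le ha0 (by linarith) hℓ u
  have hE := one_add_pow_mul_exp_neg_le (half_pos hm) (n + 1 + e) (abs_nonneg u)
  have hexp : exp (m * (a * |u|)) * exp (-m * |u|) ≤ exp (-(m / 2 * |u|)) := by
    rw [← exp_add]
    gcongr
    nlinarith [mul_nonneg hm.le (abs_nonneg u)]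
  simp only [hderiv, abs_div, abs_mul, abs_pow, abs_of_pos ha0]
  calc exp (-m * |u|) * (|u| ^ e * (a ^ ℓ * |iteratedDeriv ℓ G (a * u)| / a ^ n))
      ≤ exp (-m * |u|) * (|u| ^ e *
          (a ^ (n + 1) * (L * exp (m * (a * |u|)) * (1 + |u|) ^ (n + 1)) / a ^ n)) := by
        gcongr
    _ = a * L * ((|u| ^ e * (1 + |u|) ^ (n + 1)) *
          (exp (m * (a * |u|)) * exp (-m * |u|))) := by
        field_simp
        ring
    _ ≤ a * L * ((1 + |u|) ^ (n + 1 + e) * exp (-(m / 2 * |u|))) := by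
        rw [pow_add _ (n + 1) e, mul_comm ((1 + |u|) ^ (n + 1))]
        gcongr
        linarith [abs_nonneg u]
    _ ≤ a * (L * ((n + 1 + e).factorial / (m / 2) ^ (n + 1 + e) * exp (m / 2))) := by
        rw [mul_assoc]; gcongr

end FlatRescaling

section WeightedNorm

variable {m : ℝ} {N : ℕ}

theorem WeightedNormLE.abs_iteratedDeriv_le {F : ℝ → ℝ} {L : ℝ} (h : WeightedNormLE m N F L)
    {ℓ : ℕ} (hℓ : ℓ ≤ N) (x : ℝ) : |iteratedDeriv ℓ F x| ≤ L * exp (m * |x|) := by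
  have := h ℓ hℓ x
  rw [neg_mul, exp_neg, inv_mul_le_iff₀ (exp_pos _)] at this
  linarith

open Filter Topology in
theorem weightedNormTendstoZero_of_le_rpow_third {f : ℝ → ℝ → ℝ}
    (h : ∃ K, ∀ ε, 0 < ε → ε ^ ((1 : ℝ) / 3) ≤ 1 / 2 →
      WeightedNormLE m N (f ε) (ε ^ ((1 : ℝ) / 3) * K)) :
    WeightedNormTendstoZero m N f := by
  obtain ⟨K, h⟩ := h
  intro δ hδ
  have hlim : Tendsto (fun ε : ℝ => ε ^ ((1 : ℝ) / 3)) (𝓝[>] 0) (𝓝 0) := by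
    have := (continuous_rpow_const (by norm_num : (0 : ℝ) ≤ 1 / 3)).tendsto 0
    rw [zero_rpow (by norm_num)] at this
    exact this.mono_left nhdsWithin_le_nhds
  have hKlim : Tendsto (fun ε : ℝ => ε ^ ((1 : ℝ) / 3) * K) (𝓝[>] 0) (𝓝 0) := by
    simpa using hlim.mul_const K
  obtain ⟨ε₀, hε₀, hsub⟩ := mem_nhdsGT_iff_exists_Ioc_subset.1
    ((hlim.eventually (ge_mem_nhds (by norm_num : (0 : ℝ) < 1 / 2))).and
      (hKlim.eventually (ge_mem_nhds hδ)))
  refine ⟨ε₀, hε₀, fun ε hε hεle ℓ hℓ u => ?_⟩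
  obtain ⟨hscale, hsmall⟩ := hsub ⟨hε, hεle⟩
  exact (h ε hε hscale ℓ hℓ u).trans hsmall

theorem iteratedDeriv_fun_id_mul {P : ℝ → ℝ} {ℓ : ℕ} (hP : ContDiff ℝ ℓ P) (u : ℝ) :
    iteratedDeriv ℓ (fun v => v * P v) u =
      u * iteratedDeriv ℓ P u + ℓ * iteratedDeriv (ℓ - 1) P u := by
  rw [iteratedDeriv_fun_mul (by fun_prop) hP.contDiffAt]
  rcases ℓ with _ | k
  · simp
  · rw [sum_range_succ', sum_range_succ', sum_eq_zero fun i _ => by simp [iteratedDeriv_fun_id]]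
    simp [iteratedDeriv_fun_id, add_comm]

theorem weightedNormLE_fun_id_mul {P : ℝ → ℝ} (hP : ContDiff ℝ N P) {A B : ℝ}
    (hA : ∀ ℓ ≤ N, ∀ u, exp (-m * |u|) * (|u| * |iteratedDeriv ℓ P u|) ≤ A)
    (hB : WeightedNormLE m N P B) :
    WeightedNormLE m N (fun v => v * P v) (A + N * B) := by
  intro ℓ hℓ u
  rw [iteratedDeriv_fun_id_mul (hP.of_le (by exact_mod_cast hℓ))]
  calc exp (-m * |u|) * |u * iteratedDeriv ℓ P u + ℓ * iteratedDeriv (ℓ - 1) P u|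
      ≤ exp (-m * |u|) * (|u * iteratedDeriv ℓ P u| + |ℓ * iteratedDeriv (ℓ - 1) P u|) := by
        gcongr
        exact abs_add_le _ _
    _ = exp (-m * |u|) * (|u| * |iteratedDeriv ℓ P u|)
          + ℓ * (exp (-m * |u|) * |iteratedDeriv (ℓ - 1) P u|) := by
        rw [abs_mul, abs_mul, Nat.abs_cast]
        ring
    _ ≤ A + N * B := by
        gcongr
        · exact hA ℓ hℓ u
        · exact hB (ℓ - 1) (by omega) u

end WeightedNorm

theorem rpow_intCast_div_three {ε : ℝ} (hε : 0 ≤ ε) (k : ℤ) :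
    ε ^ ((k : ℝ) / 3) = (ε ^ ((1 : ℝ) / 3)) ^ k := by
  rw [← rpow_intCast, ← rpow_mul hε]
  ring_nf

section TaylorRemainder

variable {m : ℝ} {N n : ℕ} {F : ℝ → ℝ}

theorem exists_weighted_iteratedDeriv_rescale_sub_taylorPolyZero_le (hF : ContDiff ℝ N F)
    (hn : n < N) (hFb : ∃ L, WeightedNormLE m N F L) (hm : 0 < m) (e : ℕ) :
    ∃ K, ∀ a, 0 < a → a ≤ 1 / 2 → ∀ ℓ ≤ N, ∀ u, exp (-m * |u|) * (|u| ^ e *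
      |iteratedDeriv ℓ (fun v => (F (a * v) - taylorPolyZero F n (a * v)) / a ^ n) u|) ≤
        a * K := by
  obtain ⟨L, hL⟩ := hFb
  refine exists_weighted_iteratedDeriv_rescale_le (G := fun z => F z - taylorPolyZero F n z)
    (hF.sub ((contDiff_taylorPolyZero F n).of_le le_top)) hn (fun k hk => ?_)
    ⟨L, fun k hk hkN x => ?_⟩ hm e
  · rw [iteratedDeriv_sub_taylorPolyZero hF (by omega), iteratedDeriv_taylorPolyZero_zero hk,
      sub_self]
  · rw [iteratedDeriv_sub_taylorPolyZero hF hkN, iteratedDeriv_taylorPolyZero_of_lt hk, sub_zero]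
    exact hL.abs_iteratedDeriv_le hkN x

theorem weightedNormTendstoZero_rescale_sub_taylorPolyZero (hF : ContDiff ℝ N F) (hn : n < N)
    (hFb : ∃ L, WeightedNormLE m N F L) (hm : 0 < m) {f : ℝ → ℝ → ℝ}
    (hf : ∀ ε, 0 < ε → f ε = fun v => (F (ε ^ ((1 : ℝ) / 3) * v)
      - taylorPolyZero F n (ε ^ ((1 : ℝ) / 3) * v)) / (ε ^ ((1 : ℝ) / 3)) ^ n) :
    WeightedNormTendstoZero m N f := by
  obtain ⟨K, hK⟩ := exists_weighted_iteratedDeriv_rescale_sub_taylorPolyZero_le hF hn hFb hm 0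
  refine weightedNormTendstoZero_of_le_rpow_third ⟨K, fun ε hε ha ℓ hℓ u => ?_⟩
  simpa [hf ε hε] using hK _ (rpow_pos_of_pos hε _) ha ℓ hℓ u

theorem weightedNormTendstoZero_quadratic (hF : ContDiff ℝ N F) (hN : 2 < N)
    (hFb : ∃ L, WeightedNormLE m N F L) (hF0 : F 0 = 0) (hF1 : deriv F 0 = 0) (hm : 0 < m) :
    WeightedNormTendstoZero m N (fun ε v => ε ^ (-(2 : ℝ) / 3) * F (ε ^ ((1 : ℝ) / 3) * v)
      - 1 / 2 * iteratedDeriv 2 F 0 * v ^ 2) := by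
  refine weightedNormTendstoZero_rescale_sub_taylorPolyZero hF hN hFb hm fun ε hε => ?_
  have ha : 0 < ε ^ ((1 : ℝ) / 3) := rpow_pos_of_pos hε _
  funext v
  rw [show -(2 : ℝ) / 3 = ((-2 : ℤ) : ℝ) / 3 by norm_num, rpow_intCast_div_three hε.le,
    zpow_neg, zpow_ofNat, taylorPolyZero_two, hF0, hF1]
  field_simp
  ring

theorem weightedNormTendstoZero_cubic (hF : ContDiff ℝ N F) (hN : 2 < N)
    (hFb : ∃ L, WeightedNormLE m N F L) (hF1 : deriv F 0 = 0) (hm : 0 < m) :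
    WeightedNormTendstoZero m N (fun ε v =>
      ε ^ (-(2 : ℝ) / 3) * (F (ε ^ ((1 : ℝ) / 3) * v) - F 0) * v
        - 1 / 2 * iteratedDeriv 2 F 0 * v ^ 3) := by
  obtain ⟨K₁, hK₁⟩ :=
    exists_weighted_iteratedDeriv_rescale_sub_taylorPolyZero_le hF hN hFb hm 1
  obtain ⟨K₀, hK₀⟩ :=
    exists_weighted_iteratedDeriv_rescale_sub_taylorPolyZero_le hF hN hFb hm 0
  refine weightedNormTendstoZero_of_le_rpow_third ⟨K₁ + N * K₀, fun ε hε ha => ?_⟩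
  have ha0 : 0 < ε ^ ((1 : ℝ) / 3) := rpow_pos_of_pos hε _
  set P : ℝ → ℝ := fun v => (F (ε ^ ((1 : ℝ) / 3) * v)
    - taylorPolyZero F 2 (ε ^ ((1 : ℝ) / 3) * v)) / (ε ^ ((1 : ℝ) / 3)) ^ 2 with hP
  have hfun : (fun v => ε ^ (-(2 : ℝ) / 3) * (F (ε ^ ((1 : ℝ) / 3) * v) - F 0) * v
      - 1 / 2 * iteratedDeriv 2 F 0 * v ^ 3) = fun v => v * P v := by
    funext v
    simp only [hP]
    rw [show -(2 : ℝ) / 3 = ((-2 : ℤ) : ℝ) / 3 by norm_num, rpow_intCast_div_three hε.le,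
      zpow_neg, zpow_ofNat, taylorPolyZero_two, hF1]
    field_simp
    ring
  have hPsmooth : ContDiff ℝ N P :=
    ((hF.comp (contDiff_const.mul contDiff_id)).sub
      (((contDiff_taylorPolyZero F 2).of_le le_top).comp
        (contDiff_const.mul contDiff_id))).div_const _
  have key := weightedNormLE_fun_id_mul (m := m) hPsmooth
    (fun ℓ hℓ u => by simpa only [pow_one] using hK₁ _ ha0 ha ℓ hℓ u)
    (fun ℓ hℓ u => by simpa only [pow_zero, one_mul] using hK₀ _ ha0 ha ℓ hℓ u)
  simp only [hfun]
  convert key using 1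
  ring

theorem weightedNormTendstoZero_quartic (hF : ContDiff ℝ N F) (hN : 4 < N)
    (hFb : ∃ L, WeightedNormLE m N F L) (hF1 : deriv F 0 = 0) (hF3 : iteratedDeriv 3 F 0 = 0)
    (hm : 0 < m) :
    WeightedNormTendstoZero m N (fun ε v =>
      ε ^ (-(4 : ℝ) / 3) * (F (ε ^ ((1 : ℝ) / 3) * v) - F 0
        - 1 / 2 * iteratedDeriv 2 F 0 * ε ^ ((2 : ℝ) / 3) * v ^ 2)
        - 1 / 24 * iteratedDeriv 4 F 0 * v ^ 4) := by
  refine weightedNormTendstoZero_rescale_sub_taylorPolyZero hF hN hFb hm fun ε hε => ?_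
  have ha : 0 < ε ^ ((1 : ℝ) / 3) := rpow_pos_of_pos hε _
  funext v
  rw [show -(4 : ℝ) / 3 = ((-4 : ℤ) : ℝ) / 3 by norm_num,
    show (2 : ℝ) / 3 = ((2 : ℤ) : ℝ) / 3 by norm_num, rpow_intCast_div_three hε.le,
    rpow_intCast_div_three hε.le, zpow_neg, zpow_ofNat, zpow_ofNat, taylorPolyZero_four,
    taylorPolyZero_two, hF1, hF3]
  field_simp
  ring

end TaylorRemainder

/-- Convergence of the rescaled nonlinearities `F_{i,ε}` to their
limiting polynomial nonlinearities in the weighted norm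
`‖F‖_{m,7} = sup_{0≤ℓ≤7} sup_x e^{−m|x|} |F^{(ℓ)}(x)|` (convergence of the norm to `0` is
expressed as: for every `δ > 0` there is `ε₀ > 0` below which all the weighted values are
at most `δ`). -/
theorem stmt_13 (m : ℝ) (hm : 0 < m) :
    -- (i)
    (∀ F : ℝ → ℝ, ContDiff ℝ 7 F →
      (∃ L : ℝ, ∀ ℓ : ℕ, ℓ ≤ 7 → ∀ x : ℝ,
        Real.exp (-m * |x|) * |iteratedDeriv ℓ F x| ≤ L) →
      F 0 = 0 → deriv F 0 = 0 →
      ∀ δ : ℝ, 0 < δ → ∃ ε₀ : ℝ, 0 < ε₀ ∧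
        ∀ ε : ℝ, 0 < ε → ε ≤ ε₀ → ∀ ℓ : ℕ, ℓ ≤ 7 → ∀ u : ℝ,
          Real.exp (-m * |u|) *
            |iteratedDeriv ℓ (fun v : ℝ =>
                ε ^ (-(2 : ℝ) / 3) * F (ε ^ ((1 : ℝ) / 3) * v)
                  - 1 / 2 * iteratedDeriv 2 F 0 * v ^ 2) u| ≤ δ) ∧
    -- (ii)
    (∀ F : ℝ → ℝ, ContDiff ℝ 7 F →
      (∃ L : ℝ, ∀ ℓ : ℕ, ℓ ≤ 7 → ∀ x : ℝ,
        Real.exp (-m * |x|) * |iteratedDeriv ℓ F x| ≤ L) →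
      deriv F 0 = 0 →
      ∀ δ : ℝ, 0 < δ → ∃ ε₀ : ℝ, 0 < ε₀ ∧
        ∀ ε : ℝ, 0 < ε → ε ≤ ε₀ → ∀ ℓ : ℕ, ℓ ≤ 7 → ∀ u : ℝ,
          Real.exp (-m * |u|) *
            |iteratedDeriv ℓ (fun v : ℝ =>
                ε ^ (-(2 : ℝ) / 3) * (F (ε ^ ((1 : ℝ) / 3) * v) - F 0) * v
                  - 1 / 2 * iteratedDeriv 2 F 0 * v ^ 3) u| ≤ δ) ∧
    -- (iii)
    (∀ F : ℝ → ℝ, ContDiff ℝ 7 F →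
      (∃ L : ℝ, ∀ ℓ : ℕ, ℓ ≤ 7 → ∀ x : ℝ,
        Real.exp (-m * |x|) * |iteratedDeriv ℓ F x| ≤ L) →
      deriv F 0 = 0 → iteratedDeriv 3 F 0 = 0 →
      ∀ δ : ℝ, 0 < δ → ∃ ε₀ : ℝ, 0 < ε₀ ∧
        ∀ ε : ℝ, 0 < ε → ε ≤ ε₀ → ∀ ℓ : ℕ, ℓ ≤ 7 → ∀ u : ℝ,
          Real.exp (-m * |u|) *
            |iteratedDeriv ℓ (fun v : ℝ =>
                ε ^ (-(4 : ℝ) / 3) * (F (ε ^ ((1 : ℝ) / 3) * v) - F 0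
                    - 1 / 2 * iteratedDeriv 2 F 0 * ε ^ ((2 : ℝ) / 3) * v ^ 2)
                  - 1 / 24 * iteratedDeriv 4 F 0 * v ^ 4) u| ≤ δ) := by
  refine ⟨fun F hF hFb hF0 hF1 => ?_, fun F hF hFb hF1 => ?_, fun F hF hFb hF1 hF3 => ?_⟩
  · exact weightedNormTendstoZero_quadratic (N := 7) hF (by norm_num) hFb hF0 hF1 hm
  · exact weightedNormTendstoZero_cubic (N := 7) hF (by norm_num) hFb hF1 hm
  · exact weightedNormTendstoZero_quartic (N := 7) hF (by norm_num) hFb hF1 hF3 hm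
end
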